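/- arXiv:1103.2058 — 6 statements merged into one kernel-verified Lean document; each statement's English description precedes it below -/
import Mathlib

section
/- Let $(L_i)_{i \le 0}$ be i.i.d. nonnegative integer-valued random variables with $\mathbb{P}(L_0 = 0) > 0$. Define the coalescence time $\Theta[0] := \sup\{n \le 0 : L_i \le i - n \text{ for all } i = n, \ldots, 0\}$. If $\sum_{k \ge 1} \prod_{i=0}^{k-1} \mathbb{P}(L_0 \le i) = +\infty$, then $\Theta[0]$ is almost surely finite. -/
open MeasureTheory ProbabilityTheory Finset

namespace Stmt3Aux

variable {Ω : Type*} [MeasurableSpace Ω]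

/-- block of conditions `L (-j) ω ≤ k - j` for `a ≤ j ≤ k`. -/
def G (L : ℤ → Ω → ℕ) (a k : ℕ) : Set Ω :=
  ⋂ j ∈ Finset.Ico a (k+1), L (-(j:ℤ)) ⁻¹' {m | m ≤ k - j}

def B (L : ℤ → Ω → ℕ) (k : ℕ) : Set Ω := G L 0 k

def F (L : ℤ → Ω → ℕ) (t : ℕ) : Set Ω := B L t \ ⋃ s < t, B L s

variable {L : ℤ → Ω → ℕ}

lemma measurableSet_G (hmeas : ∀ i, Measurable (L i)) (a k : ℕ) :
    MeasurableSet (G L a k) := by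
  exact Finset.measurableSet_biInter _ fun j _ => (hmeas _) .of_discrete

lemma measurableSet_B (hmeas : ∀ i, Measurable (L i)) (k : ℕ) :
    MeasurableSet (B L k) := measurableSet_G hmeas 0 k

lemma measurableSet_F (hmeas : ∀ i, Measurable (L i)) (t : ℕ) :
    MeasurableSet (F L t) :=
  (measurableSet_B hmeas t).diff (MeasurableSet.biUnion (Set.to_countable _)
    fun s _ => measurableSet_B hmeas s)

variable {μ : Measure Ω}

/-- product formula for cylinder events over distinct nonpositive coordinates. -/
lemma meas_biInter_pre (hindep : iIndepFun L μ)
    (S : Finset ℕ) (T : ℕ → Set ℕ) :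
    μ (⋂ j ∈ S, L (-(j:ℤ)) ⁻¹' T j) = ∏ j ∈ S, μ (L (-(j:ℤ)) ⁻¹' T j) := by
  have hinj : Function.Injective (fun j : ℕ => -(j:ℤ)) := by
    intro a b h; simpa using h
  have key := hindep.measure_inter_preimage_eq_mul (S.image (fun j : ℕ => -(j:ℤ)))
    (sets := fun i => T (-i).toNat) (fun i _ => .of_discrete)
  rw [Finset.set_biInter_finset_image, Finset.prod_image (fun a _ b _ h => hinj h)] at key
  simpa using key

lemma meas_G (hindep : iIndepFun L μ)
    (hident : ∀ i, IdentDistrib (L i) (L 0) μ μ) (a k : ℕ) :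
    μ (G L a k) = ∏ i ∈ Finset.range (k + 1 - a), μ {ω | L 0 ω ≤ i} := by
  rw [G, meas_biInter_pre hindep]
  have hfac : ∀ j : ℕ, μ (L (-(j:ℤ)) ⁻¹' {m | m ≤ k - j}) = μ {ω | L 0 ω ≤ k - j} := by
    intro j
    exact (hident (-(j:ℤ))).measure_mem_eq .of_discrete
  calc ∏ j ∈ Finset.Ico a (k+1), μ (L (-(j:ℤ)) ⁻¹' {m | m ≤ k - j})
      = ∏ j ∈ Finset.Ico a (k+1), μ {ω | L 0 ω ≤ k - j} :=
        Finset.prod_congr rfl fun j _ => hfac j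
    _ = ∏ i ∈ Finset.range (k + 1 - a), μ {ω | L 0 ω ≤ k - (a + i)} := by
        rw [Finset.prod_Ico_eq_prod_range]
    _ = ∏ i ∈ Finset.range (k + 1 - a), μ {ω | L 0 ω ≤ (k + 1 - a) - 1 - i} := by
        refine Finset.prod_congr rfl fun i hi => ?_
        rw [Finset.mem_range] at hi
        have h2 : k - (a + i) = (k + 1 - a) - 1 - i := by omega
        rw [h2]
    _ = ∏ i ∈ Finset.range (k + 1 - a), μ {ω | L 0 ω ≤ i} :=
        Finset.prod_range_reflect (fun i => μ {ω | L 0 ω ≤ i}) _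

lemma meas_B (hindep : iIndepFun L μ)
    (hident : ∀ i, IdentDistrib (L i) (L 0) μ μ) (k : ℕ) :
    μ (B L k) = ∏ i ∈ Finset.range (k + 1), μ {ω | L 0 ω ≤ i} := by
  simpa [B] using meas_G hindep hident 0 k

/-- If `A` is measurable and determined by coordinates `0, …, t`, then `A` is independent of
any cylinder event on coordinates `> t`. -/
lemma indep_split (hmeas : ∀ i, Measurable (L i))
    (hindep : iIndepFun L μ)
    (t : ℕ) (A : Set Ω) (hA : MeasurableSet A)
    (hdet : ∀ ω ω', (∀ j : ℕ, j ≤ t → L (-(j:ℤ)) ω = L (-(j:ℤ)) ω') → ω ∈ A → ω' ∈ A)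
    (b : ℕ) (T : ℕ → Set ℕ) :
    μ (A ∩ ⋂ j ∈ Finset.Ico (t+1) b, L (-(j:ℤ)) ⁻¹' T j)
      = μ A * μ (⋂ j ∈ Finset.Ico (t+1) b, L (-(j:ℤ)) ⁻¹' T j) := by
  set Gs : Set Ω := ⋂ j ∈ Finset.Ico (t+1) b, L (-(j:ℤ)) ⁻¹' T j with hGsdef
  have hGsmeas : MeasurableSet Gs :=
    Finset.measurableSet_biInter _ fun j _ => (hmeas _) .of_discrete
  -- cylinders on coordinates 0..t
  set ext : (Fin (t+1) → ℕ) → (ℕ → ℕ) :=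
    fun w j => if h : j < t + 1 then w ⟨j, h⟩ else 0 with hextdef
  set V : Set (ℕ → ℕ) := Set.range ext with hVdef
  have hVc : V.Countable := Set.countable_range ext
  set Cyl : (ℕ → ℕ) → Set Ω :=
    fun v => ⋂ j ∈ Finset.range (t+1), L (-(j:ℤ)) ⁻¹' {v j} with hCyldef
  have hCylmeas : ∀ v, MeasurableSet (Cyl v) :=
    fun v => Finset.measurableSet_biInter _ fun j _ => (hmeas _) .of_discrete
  have hVzero : ∀ v ∈ V, ∀ j : ℕ, t + 1 ≤ j → v j = 0 := by
    rintro v ⟨w, rfl⟩ j hj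
    simp only [hextdef]
    rw [dif_neg (by omega)]
  have hmemCyl : ∀ v (ω : Ω), ω ∈ Cyl v ↔ ∀ j : ℕ, j < t + 1 → L (-(j:ℤ)) ω = v j := by
    intro v ω
    simp [hCyldef, eq_comm]
  have hpart : ∀ ω : Ω, ∃ v ∈ V, ω ∈ Cyl v := by
    intro ω
    refine ⟨ext (fun j : Fin (t+1) => L (-(j:ℤ)) ω), ⟨fun j : Fin (t+1) => L (-(j:ℤ)) ω, rfl⟩, ?_⟩
    rw [hmemCyl]
    intro j hj
    simp only [hextdef]
    rw [dif_pos hj]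
  have hdisj : V.PairwiseDisjoint Cyl := by
    intro v hv w hw hvw
    refine Set.disjoint_left.2 fun ω hv' hw' => hvw ?_
    funext j
    rcases lt_or_ge j (t+1) with hj | hj
    · rw [← (hmemCyl v ω).1 hv' j hj, ← (hmemCyl w ω).1 hw' j hj]
    · rw [hVzero v hv j hj, hVzero w hw j hj]
  -- decompose an arbitrary coordinate-determined set along cylinders
  have hdecomp : ∀ (D : Set Ω), D = ⋃ v ∈ V, (Cyl v ∩ D) := by
    intro D
    ext ω
    constructor
    · intro hω
      obtain ⟨v, hv, hc⟩ := hpart ω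
      exact Set.mem_biUnion hv ⟨hc, hω⟩
    · rintro ⟨s, ⟨v, rfl⟩, ⟨w, ⟨hw, rfl⟩, h2⟩⟩
      exact h2.2
  have hdisj' : ∀ (D : Set Ω), V.PairwiseDisjoint (fun v => Cyl v ∩ D) :=
    fun D => hdisj.mono fun v => Set.inter_subset_left
  -- key per-cylinder computation
  have hkey : ∀ v ∈ V, μ (Cyl v ∩ (A ∩ Gs)) = μ (Cyl v ∩ A) * μ Gs := by
    intro v hv
    rcases Set.eq_empty_or_nonempty (Cyl v ∩ A) with he | ⟨ω₀, hω₀⟩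
    · have : Cyl v ∩ (A ∩ Gs) = ∅ := by
        rw [Set.eq_empty_iff_forall_notMem] at he ⊢
        intro ω hω; exact he ω ⟨hω.1, hω.2.1⟩
      rw [this, he]; simp
    · have hsub : Cyl v ⊆ A := by
        intro ω hω
        refine hdet ω₀ ω (fun j hj => ?_) hω₀.2
        rw [(hmemCyl v ω₀).1 hω₀.1 j (by omega), (hmemCyl v ω).1 hω j (by omega)]
      have h1 : Cyl v ∩ (A ∩ Gs) = Cyl v ∩ Gs := by
        ext ω; exact ⟨fun h => ⟨h.1, h.2.2⟩, fun h => ⟨h.1, hsub h.1, h.2⟩⟩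
      have h2 : Cyl v ∩ A = Cyl v := by
        ext ω; exact ⟨fun h => h.1, fun h => ⟨h, hsub h⟩⟩
      rw [h1, h2]
      -- product formula: Cyl v ∩ Gs
      have hdisjF : Disjoint (Finset.range (t+1)) (Finset.Ico (t+1) b) := by
        rw [Finset.disjoint_left]
        intro j hj hj'
        rw [Finset.mem_range] at hj
        rw [Finset.mem_Ico] at hj'
        omega
      set T' : ℕ → Set ℕ := fun j => if j < t + 1 then {v j} else T j with hT'def
      have hCeq : Cyl v = ⋂ j ∈ Finset.range (t+1), L (-(j:ℤ)) ⁻¹' T' j := by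
        refine Set.iInter₂_congr fun j hj => ?_
        rw [Finset.mem_range] at hj
        rw [hT'def]; simp [show j ≤ t by omega]
      have hGeq : Gs = ⋂ j ∈ Finset.Ico (t+1) b, L (-(j:ℤ)) ⁻¹' T' j := by
        refine Set.iInter₂_congr fun j hj => ?_
        rw [Finset.mem_Ico] at hj
        rw [hT'def]; simp [show ¬ j ≤ t by omega]
      have hun : (⋂ j ∈ Finset.range (t+1), L (-(j:ℤ)) ⁻¹' T' j)
          ∩ (⋂ j ∈ Finset.Ico (t+1) b, L (-(j:ℤ)) ⁻¹' T' j)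
          = ⋂ j ∈ (Finset.range (t+1) ∪ Finset.Ico (t+1) b), L (-(j:ℤ)) ⁻¹' T' j := by
        ext ω
        simp only [Set.mem_inter_iff, Set.mem_iInter, Finset.mem_union]
        constructor
        · rintro ⟨h1', h2'⟩ j hj
          rcases hj with hj | hj
          · exact h1' j hj
          · exact h2' j hj
        · intro h'
          exact ⟨fun j hj => h' j (Or.inl hj), fun j hj => h' j (Or.inr hj)⟩
      rw [hCeq, hGeq, hun, meas_biInter_pre hindep,
        Finset.prod_union hdisjF, ← meas_biInter_pre hindep, ← meas_biInter_pre hindep]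
  calc μ (A ∩ Gs) = μ (⋃ v ∈ V, (Cyl v ∩ (A ∩ Gs))) := by rw [← hdecomp]
    _ = ∑' v : V, μ (Cyl v ∩ (A ∩ Gs)) :=
        measure_biUnion hVc (hdisj' _) fun v _ => ((hCylmeas v).inter (hA.inter hGsmeas))
    _ = ∑' v : V, μ (Cyl v ∩ A) * μ Gs := by
        exact tsum_congr fun v => hkey v v.2
    _ = (∑' v : V, μ (Cyl v ∩ A)) * μ Gs := ENNReal.tsum_mul_right
    _ = μ (⋃ v ∈ V, (Cyl v ∩ A)) * μ Gs := by
        rw [measure_biUnion hVc (hdisj' _) fun v _ => ((hCylmeas v).inter hA)]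
    _ = μ A * μ Gs := by rw [← hdecomp]

lemma mem_B_iff (k : ℕ) (ω : Ω) : ω ∈ B L k ↔ ∀ j : ℕ, j ≤ k → L (-(j:ℤ)) ω ≤ k - j := by
  simp only [B, G, Set.mem_iInter, Finset.mem_Ico, Set.mem_preimage, Set.mem_setOf_eq]
  constructor
  · intro h j hj; exact h j ⟨Nat.zero_le _, by omega⟩
  · intro h j hj; exact h j (by omega)

lemma B_det {s t : ℕ} (hst : s ≤ t) {ω ω' : Ω}
    (h : ∀ j : ℕ, j ≤ t → L (-(j:ℤ)) ω = L (-(j:ℤ)) ω') :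
    ω ∈ B L s ↔ ω' ∈ B L s := by
  rw [mem_B_iff, mem_B_iff]
  constructor
  · intro h' j hj; rw [← h j (by omega)]; exact h' j hj
  · intro h' j hj; rw [h j (by omega)]; exact h' j hj

lemma F_det (t : ℕ) (ω ω' : Ω)
    (h : ∀ j : ℕ, j ≤ t → L (-(j:ℤ)) ω = L (-(j:ℤ)) ω') :
    ω ∈ F L t → ω' ∈ F L t := by
  rintro ⟨h1, h2⟩
  refine ⟨(B_det le_rfl h).1 h1, fun hc => h2 ?_⟩
  simp only [Set.mem_iUnion] at hc ⊢
  obtain ⟨s, hs, hmem⟩ := hc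
  exact ⟨s, hs, (B_det (le_of_lt hs) h).2 hmem⟩

lemma F_inter_B {t k : ℕ} (htk : t ≤ k) :
    F L t ∩ B L k = F L t ∩ G L (t+1) k := by
  ext ω
  simp only [Set.mem_inter_iff, G, Set.mem_iInter, Finset.mem_Ico, Set.mem_preimage,
    Set.mem_setOf_eq]
  constructor
  · rintro ⟨hF, hB⟩
    rw [mem_B_iff] at hB
    exact ⟨hF, fun j hj => hB j (by omega)⟩
  · rintro ⟨hF, hG⟩
    refine ⟨hF, ?_⟩
    have hBt := hF.1
    rw [mem_B_iff] at hBt ⊢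
    intro j hj
    rcases le_or_gt j t with h' | h'
    · exact le_trans (hBt j h') (by omega)
    · exact hG j ⟨by omega, by omega⟩

lemma B_subset_union (k : ℕ) : B L k ⊆ ⋃ t ∈ Finset.range (k+1), (F L t ∩ B L k) := by
  intro ω hω
  have hex : ∃ t, ω ∈ B L t := ⟨k, hω⟩
  classical
  have ht₀ : ω ∈ B L (Nat.find hex) := Nat.find_spec hex
  have ht₀le : Nat.find hex ≤ k := Nat.find_le hω
  have hωF : ω ∈ F L (Nat.find hex) := by
    refine ⟨ht₀, fun hc => ?_⟩
    simp only [Set.mem_iUnion] at hc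
    obtain ⟨s, hs, hmem⟩ := hc
    have hle : Nat.find hex ≤ s := Nat.find_le hmem
    omega
  exact Set.mem_biUnion (Finset.mem_range.2 (by omega)) ⟨hωF, hω⟩

lemma F_pairwise_disjoint :
    ∀ s t : ℕ, s ≠ t → Disjoint (F L s) (F L t) := by
  have key : ∀ s t : ℕ, s < t → Disjoint (F L s) (F L t) := by
    intro s t hst
    refine Set.disjoint_left.2 fun ω hs ht => ?_
    exact ht.2 (Set.mem_biUnion hst hs.1)
  intro s t hst
  rcases lt_or_gt_of_ne hst with h | h
  · exact key s t h
  · exact (key t s h).symm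

/-- The renewal identity. -/
lemma renewal (hmeas : ∀ i, Measurable (L i))
    (hindep : iIndepFun L μ)
    (hident : ∀ i, IdentDistrib (L i) (L 0) μ μ) (k : ℕ) :
    μ (B L k) = ∑ t ∈ Finset.range (k+1),
      μ (F L t) * ∏ i ∈ Finset.range (k - t), μ {ω | L 0 ω ≤ i} := by
  have hBeq : B L k = ⋃ t ∈ Finset.range (k+1), (F L t ∩ B L k) := by
    refine Set.Subset.antisymm (B_subset_union k) ?_
    intro ω hω
    simp only [Set.mem_iUnion] at hω
    obtain ⟨t, _, _, h2⟩ := hω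
    exact h2
  rw [hBeq, measure_biUnion_finset ?hd fun t _ => ((measurableSet_F hmeas t).inter
    (measurableSet_B hmeas k))]
  case hd =>
    intro s hs t ht hst
    exact (F_pairwise_disjoint s t hst).mono Set.inter_subset_left Set.inter_subset_left
  refine Finset.sum_congr rfl fun t ht => ?_
  rw [Finset.mem_range] at ht
  have htk : t ≤ k := by omega
  rw [F_inter_B htk]
  have := indep_split (μ := μ) hmeas hindep t (F L t) (measurableSet_F hmeas t)
    (F_det t) (k+1) (fun j => {m | m ≤ k - j})
  have hG := meas_G (μ := μ) hindep hident (t+1) k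
  rw [G] at hG
  rw [G, this, hG]
  have harith : k + 1 - (t + 1) = k - t := by omega
  rw [harith]

end Stmt3Aux

open Stmt3Aux

/-- Let `(L i)_{i ≤ 0}` be i.i.d. `ℕ`-valued random variables with `P(L 0 = 0) > 0`,
and `Θ[0] = sup{n ≤ 0 : L i ≤ i - n, i = n, …, 0}`.  If
`∑_{k ≥ 1} ∏_{i=0}^{k-1} P(L 0 ≤ i) = +∞` (i.e. the series is not summable),
then `Θ[0]` is a.s. finite, i.e. a.s. some `n ≤ 0` works. -/
theorem stmt3 {Ω : Type*} [MeasurableSpace Ω] (μ : Measure Ω) [IsProbabilityMeasure μ]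
    (L : ℤ → Ω → ℕ) (hmeas : ∀ i, Measurable (L i))
    (hindep : iIndepFun L μ)
    (hident : ∀ i, IdentDistrib (L i) (L 0) μ μ)
    (h0 : 0 < μ {ω | L 0 ω = 0})
    (hdiv : ¬ Summable (fun k : ℕ =>
      ∏ i ∈ Finset.range k, (μ {ω | L 0 ω ≤ i}).toReal)) :
    μ {ω | ∃ n : ℤ, n ≤ 0 ∧ ∀ i : ℤ, n ≤ i → i ≤ 0 → (L i ω : ℤ) ≤ i - n} = 1 := by
  classical
  -- identification of the target event with `⋃ k, B L k`
  have hset : {ω | ∃ n : ℤ, n ≤ 0 ∧ ∀ i : ℤ, n ≤ i → i ≤ 0 → (L i ω : ℤ) ≤ i - n}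
      = ⋃ k : ℕ, B L k := by
    ext ω
    simp only [Set.mem_setOf_eq, Set.mem_iUnion]
    constructor
    · rintro ⟨n, hn, h⟩
      refine ⟨(-n).toNat, (mem_B_iff _ _).2 fun j hj => ?_⟩
      have hi := h (-(j:ℤ)) (by omega) (by omega)
      omega
    · rintro ⟨k, hk⟩
      rw [mem_B_iff] at hk
      refine ⟨-(k:ℤ), by omega, fun i h1 h2 => ?_⟩
      have hj := hk (-i).toNat (by omega)
      have hrw : -(((-i).toNat : ℕ) : ℤ) = i := by omega
      rw [hrw] at hj
      omega
  rw [hset]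
  -- suppose not; derive summability
  by_contra hne
  have hPle : μ (⋃ k : ℕ, B L k) ≤ 1 := prob_le_one
  have hPlt : μ (⋃ k : ℕ, B L k) < 1 := lt_of_le_of_ne hPle hne
  set P : ℝ := (μ (⋃ k : ℕ, B L k)).toReal with hPdef
  have hPr_lt : P < 1 := by
    have := (ENNReal.toReal_lt_toReal (measure_ne_top μ _) ENNReal.one_ne_top).2 hPlt
    simpa using this
  have hPr_nonneg : 0 ≤ P := ENNReal.toReal_nonneg
  set ur : ℕ → ℝ := fun m => ∏ i ∈ Finset.range m, (μ {ω | L 0 ω ≤ i}).toReal with hurdef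
  have hur_nonneg : ∀ m, 0 ≤ ur m :=
    fun m => Finset.prod_nonneg fun i _ => ENNReal.toReal_nonneg
  set fr : ℕ → ℝ := fun t => (μ (F L t)).toReal with hfrdef
  have hfr_nonneg : ∀ t, 0 ≤ fr t := fun t => ENNReal.toReal_nonneg
  -- real renewal identity
  have hren : ∀ k : ℕ, ur (k+1) = ∑ t ∈ Finset.range (k+1), fr t * ur (k - t) := by
    intro k
    have h1 := Stmt3Aux.renewal (μ := μ) hmeas hindep hident k
    rw [Stmt3Aux.meas_B hindep hident] at h1
    have h2 := congrArg ENNReal.toReal h1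
    rw [ENNReal.toReal_prod, ENNReal.toReal_sum (fun t _ => ?ht)] at h2
    case ht =>
      exact ENNReal.mul_ne_top (measure_ne_top μ _)
        (by
          refine ne_top_of_le_ne_top ENNReal.one_ne_top ?_
          exact Finset.prod_le_one (fun i _ => zero_le) (fun i _ => prob_le_one))
    simp only [hurdef, hfrdef]
    rw [h2]
    exact Finset.sum_congr rfl fun t _ => by rw [ENNReal.toReal_mul, ENNReal.toReal_prod]
  -- partial sums of fr are bounded by P
  have hfr_sum : ∀ K : ℕ, ∑ t ∈ Finset.range K, fr t ≤ P := by
    intro K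
    have hd : Set.PairwiseDisjoint (↑(Finset.range K)) (F L) :=
      fun s _ t _ hst => F_pairwise_disjoint s t hst
    have h1 : ∑ t ∈ Finset.range K, μ (F L t) = μ (⋃ t ∈ Finset.range K, F L t) :=
      (measure_biUnion_finset hd fun t _ => measurableSet_F hmeas t).symm
    have h2 : μ (⋃ t ∈ Finset.range K, F L t) ≤ μ (⋃ k : ℕ, B L k) := by
      refine measure_mono ?_
      refine Set.iUnion₂_subset fun t _ => ?_
      exact le_trans Set.diff_subset (Set.subset_iUnion (B L) t)
    have h3 : (∑ t ∈ Finset.range K, μ (F L t)).toReal ≤ P :=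
      ENNReal.toReal_mono (measure_ne_top μ _) (h1 ▸ h2)
    rw [ENNReal.toReal_sum (fun t _ => measure_ne_top μ _)] at h3
    exact h3
  -- partial sums of `ur` are uniformly bounded
  set Sr : ℕ → ℝ := fun K => ∑ m ∈ Finset.range K, ur m with hSrdef
  have hSr_nonneg : ∀ K, 0 ≤ Sr K := fun K => Finset.sum_nonneg fun i _ => hur_nonneg i
  have hstep : ∀ K : ℕ, Sr (K+1) ≤ 1 + P * Sr (K+1) := by
    intro K
    have h0' : Sr (K+1) = 1 + ∑ k ∈ Finset.range K, ur (k+1) := by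
      simp only [hSrdef]
      rw [Finset.sum_range_succ']
      have hu0 : ur 0 = 1 := by simp [hurdef]
      rw [hu0, add_comm]
    have hbound : ∑ k ∈ Finset.range K, ur (k+1) ≤ P * Sr (K+1) := by
      calc ∑ k ∈ Finset.range K, ur (k+1)
          = ∑ k ∈ Finset.range K, ∑ t ∈ Finset.range (k+1), fr t * ur (k - t) :=
            Finset.sum_congr rfl fun k _ => hren k
        _ = ∑ k ∈ Finset.range K, ∑ t ∈ Finset.range K,
              (if t ≤ k then fr t * ur (k - t) else 0) := by
            refine Finset.sum_congr rfl fun k hk => ?_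
            rw [Finset.mem_range] at hk
            rw [← Finset.sum_filter]
            congr 1
            ext t
            simp only [Finset.mem_filter, Finset.mem_range]
            omega
        _ = ∑ t ∈ Finset.range K, ∑ k ∈ Finset.range K,
              (if t ≤ k then fr t * ur (k - t) else 0) := Finset.sum_comm
        _ ≤ ∑ t ∈ Finset.range K, fr t * Sr (K+1) := by
            refine Finset.sum_le_sum fun t ht => ?_
            have hmul : ∑ k ∈ Finset.range K, (if t ≤ k then fr t * ur (k - t) else 0)
                = fr t * ∑ k ∈ Finset.range K, (if t ≤ k then ur (k - t) else 0) := by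
              rw [Finset.mul_sum]
              refine Finset.sum_congr rfl fun k _ => ?_
              split_ifs <;> simp
            rw [hmul]
            refine mul_le_mul_of_nonneg_left ?_ (hfr_nonneg t)
            calc ∑ k ∈ Finset.range K, (if t ≤ k then ur (k - t) else 0)
                = ∑ k ∈ Finset.Ico t K, ur (k - t) := by
                  rw [← Finset.sum_filter]
                  congr 1
                  ext k
                  simp only [Finset.mem_filter, Finset.mem_range, Finset.mem_Ico]
                  omega
              _ = ∑ j ∈ Finset.range (K - t), ur (t + j - t) := Finset.sum_Ico_eq_sum_range _ t K
              _ = ∑ j ∈ Finset.range (K - t), ur j :=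
                  Finset.sum_congr rfl fun j _ => by congr 1; omega
              _ ≤ Sr (K+1) := Finset.sum_le_sum_of_subset_of_nonneg
                  (Finset.range_subset_range.2 (by omega)) fun i _ _ => hur_nonneg i
        _ ≤ P * Sr (K+1) := by
            rw [← Finset.sum_mul]
            exact mul_le_mul_of_nonneg_right (hfr_sum K) (hSr_nonneg (K+1))
    linarith
  have hSbound : ∀ K, Sr K ≤ 1 / (1 - P) := by
    intro K
    have hpos : 0 < 1 - P := by linarith
    cases K with
    | zero => simpa [hSrdef] using le_of_lt (div_pos one_pos hpos)
    | succ K =>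
      rw [le_div_iff₀ hpos]
      nlinarith [hstep K]
  exact hdiv (summable_of_sum_range_le hur_nonneg hSbound)
end

section
/- Let $(L_i)_{i \le 0}$ be i.i.d. nonnegative integer-valued random variables with $\mathbb{P}(L_0 = 0) > 0$, and let $\Theta[0] := \sup\{n \le 0 : L_i \le i - n,\ i = n, \ldots, 0\}$. If the sequence $\{\mathbb{P}(L_0 > k)\}_{k \ge 0}$ decays exponentially fast to zero, then $\Theta[0]$ has exponential tail. -/
open MeasureTheory ProbabilityTheory Finset

set_option maxHeartbeats 1000000

namespace Stmt4Aux

variable {Ω : Type*} [MeasurableSpace Ω] (L : ℤ → Ω → ℕ)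

def A (n : ℕ) : Set Ω :=
  {ω | ∀ m : ℤ, -(n : ℤ) < m → m ≤ 0 → ∃ i : ℤ, m ≤ i ∧ i ≤ 0 ∧ i - m < (L i ω : ℤ)}

def proj (S : Finset ℤ) : Ω → (S → ℕ) := fun ω i => L i ω

/-- coordinates of `A n` -/
def Sn (n : ℕ) : Finset ℤ := (Finset.range n).image (fun k : ℕ => -(k : ℤ))

lemma mem_Sn {n : ℕ} {i : ℤ} : i ∈ Sn n ↔ -(n : ℤ) < i ∧ i ≤ 0 := by
  simp only [Sn, Finset.mem_image, Finset.mem_range]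
  constructor
  · rintro ⟨k, hk, rfl⟩; omega
  · rintro ⟨h1, h2⟩; exact ⟨(-i).toNat, by omega, by omega⟩

lemma A_eq_preimage (n : ℕ) : A L n = proj L (Sn n) ⁻¹'
    {x | ∀ m : ℤ, -(n : ℤ) < m → m ≤ 0 →
      ∃ i, ∃ h : i ∈ Sn n, m ≤ i ∧ i ≤ 0 ∧ i - m < (x ⟨i, h⟩ : ℤ)} := by
  ext ω
  simp only [A, proj, Set.mem_preimage, Set.mem_setOf_eq]
  constructor
  · intro h m h1 h2
    obtain ⟨i, hi1, hi2, hi3⟩ := h m h1 h2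
    exact ⟨i, mem_Sn.2 ⟨lt_of_lt_of_le h1 hi1, hi2⟩, hi1, hi2, hi3⟩
  · intro h m h1 h2
    obtain ⟨i, _, hi1, hi2, hi3⟩ := h m h1 h2
    exact ⟨i, hi1, hi2, hi3⟩

/-- start of the block covering the point `n+g-1` -/
def mstar (n g : ℕ) : ℤ := 1 - (n : ℤ) - (g : ℤ)

/-- "near" event: the point `n+g-1` is covered from within the new block of coordinates -/
def Near (n g : ℕ) : Set Ω :=
  {ω | ∃ i : ℤ, mstar n g ≤ i ∧ i ≤ -(n : ℤ) ∧ i - mstar n g < (L i ω : ℤ)}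

def Tn (n g : ℕ) : Finset ℤ := (Finset.range g).image (fun t : ℕ => -(n : ℤ) - (t : ℤ))

lemma mem_Tn {n g : ℕ} {i : ℤ} : i ∈ Tn n g ↔ mstar n g ≤ i ∧ i ≤ -(n : ℤ) := by
  simp only [Tn, Finset.mem_image, Finset.mem_range, mstar]
  constructor
  · rintro ⟨t, ht, rfl⟩; omega
  · rintro ⟨h1, h2⟩; exact ⟨(-(n : ℤ) - i).toNat, by omega, by omega⟩

lemma Near_eq_preimage (n g : ℕ) : Near L n g = proj L (Tn n g) ⁻¹'
    {x | ∃ i, ∃ h : i ∈ Tn n g, i - mstar n g < (x ⟨i, h⟩ : ℤ)} := by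
  ext ω
  simp only [Near, proj, Set.mem_preimage, Set.mem_setOf_eq]
  constructor
  · rintro ⟨i, h1, h2, h3⟩; exact ⟨i, mem_Tn.2 ⟨h1, h2⟩, h3⟩
  · rintro ⟨i, hi, h3⟩; exact ⟨i, (mem_Tn.1 hi).1, (mem_Tn.1 hi).2, h3⟩

lemma F_eq_preimage (i : ℤ) (z : ℤ) : {ω : Ω | z < (L i ω : ℤ)} =
    proj L {i} ⁻¹' {x | z < (x ⟨i, Finset.mem_singleton_self i⟩ : ℤ)} := rfl

lemma disjoint_Sn_Tn (n g : ℕ) : Disjoint (Sn n) (Tn n g) := by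
  rw [Finset.disjoint_left]
  intro i hi hi'
  have h1 := mem_Sn.1 hi
  have h2 := mem_Tn.1 hi'
  omega

lemma disjoint_Sn_singleton (k : ℕ) : Disjoint (Sn k) ({-(k : ℤ)} : Finset ℤ) := by
  rw [Finset.disjoint_left]
  intro i hi hi'
  have h1 := mem_Sn.1 hi
  simp only [Finset.mem_singleton] at hi'
  omega

/-- the key inclusion -/
lemma incl (n g : ℕ) (hg : 1 ≤ g) :
    A L (n + g) ⊆ (A L n ∩ Near L n g) ∪
      ⋃ k ∈ Finset.range n, (A L k ∩ {ω | (n : ℤ) + g - 1 - k < (L (-(k : ℤ)) ω : ℤ)}) := by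
  intro ω hω
  have hmono : ∀ k : ℕ, k ≤ n + g → ω ∈ A L k := by
    intro k hk m h1 h2
    exact hω m (by push_cast at h1 ⊢; omega) h2
  obtain ⟨i, h1, h2, h3⟩ := hω (mstar n g) (by simp only [mstar]; push_cast; omega)
    (by simp only [mstar]; push_cast; omega)
  by_cases hc : i ≤ -(n : ℤ)
  · exact Or.inl ⟨hmono n (by omega), i, h1, hc, h3⟩
  · refine Or.inr (Set.mem_biUnion (Finset.mem_range.2 (show (-i).toNat < n by omega)) ?_)
    refine ⟨hmono (-i).toNat (by omega), ?_⟩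
    have hieq : -(((-i).toNat : ℕ) : ℤ) = i := by omega
    simp only [Set.mem_setOf_eq, hieq]
    have : (n : ℤ) + g - 1 - ((-i).toNat : ℤ) = i - mstar n g := by simp only [mstar]; omega
    rw [this]
    exact h3

section Measure

variable {μ : Measure Ω} [IsProbabilityMeasure μ]

lemma event_cast (i : ℤ) (t : ℕ) : {ω : Ω | (t : ℤ) < (L i ω : ℤ)} = {ω | t < L i ω} := by
  ext ω; simp only [Set.mem_setOf_eq, Nat.cast_lt]

lemma tail_eq (hmeas : ∀ i, Measurable (L i)) (hident : ∀ i, IdentDistrib (L i) (L 0) μ μ)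
    (i : ℤ) (z : ℤ) : μ {ω | z < (L i ω : ℤ)} = μ {ω | z < (L 0 ω : ℤ)} := by
  have h1 : {ω : Ω | z < (L i ω : ℤ)} = (L i) ⁻¹' {x : ℕ | z < (x : ℤ)} := rfl
  have h2 : {ω : Ω | z < (L 0 ω : ℤ)} = (L 0) ⁻¹' {x : ℕ | z < (x : ℤ)} := rfl
  rw [h1, h2]
  exact (hident i).measure_mem_eq (Set.to_countable _).measurableSet

lemma measurableSet_event (hmeas : ∀ i, Measurable (L i)) (i : ℤ) (z : ℤ) :
    MeasurableSet {ω : Ω | z < (L i ω : ℤ)} :=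
  (hmeas i) (show MeasurableSet {x : ℕ | z < (x : ℤ)} from (Set.to_countable _).measurableSet)

lemma measurableSet_Near (hmeas : ∀ i, Measurable (L i)) (n g : ℕ) :
    MeasurableSet (Near L n g) := by
  have : Near L n g = ⋃ (i : ℤ), ⋃ (_ : mstar n g ≤ i ∧ i ≤ -(n : ℤ)),
      {ω | i - mstar n g < (L i ω : ℤ)} := by
    ext ω
    simp only [Near, Set.mem_setOf_eq, Set.mem_iUnion]
    constructor
    · rintro ⟨i, h1, h2, h3⟩; exact ⟨i, ⟨h1, h2⟩, h3⟩
    · rintro ⟨i, ⟨h1, h2⟩, h3⟩; exact ⟨i, h1, h2, h3⟩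
  rw [this]
  exact MeasurableSet.iUnion fun i => MeasurableSet.iUnion fun _ =>
    measurableSet_event L hmeas i _

lemma Near_compl (n g : ℕ) : (Near L n g)ᶜ =
    ⋂ i ∈ Tn n g, (L i) ⁻¹' {x : ℕ | ¬ (i - mstar n g < (x : ℤ))} := by
  ext ω
  simp only [Near, Set.mem_compl_iff, Set.mem_setOf_eq, Set.mem_iInter, Set.mem_preimage,
    not_exists]
  constructor
  · intro h i hi
    have h2 := mem_Tn.1 hi
    intro hlt
    exact h i ⟨h2.1, h2.2, hlt⟩
  · intro h i hcon
    exact h i (mem_Tn.2 ⟨hcon.1, hcon.2.1⟩) hcon.2.2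

lemma measure_Near_compl (hmeas : ∀ i, Measurable (L i))
    (hindep : iIndepFun L μ)
    (hident : ∀ i, IdentDistrib (L i) (L 0) μ μ) (n g : ℕ) :
    μ ((Near L n g)ᶜ) = ∏ s ∈ Finset.range g, (1 - μ {ω | s < L 0 ω}) := by
  rw [Near_compl]
  rw [hindep.measure_inter_preimage_eq_mul (Tn n g)
    (sets := fun i => {x : ℕ | ¬ (i - mstar n g < (x : ℤ))})
    (fun i _ => (Set.to_countable _).measurableSet)]
  rw [Tn, Finset.prod_image (by intro a _ b _ h; have h' : -(n : ℤ) - (a : ℤ) = -(n : ℤ) - (b : ℤ) := h; omega)]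
  have key : ∀ t ∈ Finset.range g, μ ((L (-(n : ℤ) - (t : ℤ))) ⁻¹'
      {x : ℕ | ¬ ((-(n : ℤ) - (t : ℤ)) - mstar n g < (x : ℤ))})
      = 1 - μ {ω | (g - 1 - t : ℕ) < L 0 ω} := by
    intro t ht
    rw [Finset.mem_range] at ht
    have hz : (-(n : ℤ) - (t : ℤ)) - mstar n g = ((g - 1 - t : ℕ) : ℤ) := by
      simp only [mstar]; push_cast; omega
    have : (L (-(n : ℤ) - (t : ℤ))) ⁻¹'
        {x : ℕ | ¬ ((-(n : ℤ) - (t : ℤ)) - mstar n g < (x : ℤ))}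
        = {ω | ((g - 1 - t : ℕ) : ℤ) < (L (-(n : ℤ) - (t : ℤ)) ω : ℤ)}ᶜ := by
      rw [hz]; rfl
    rw [this, prob_compl_eq_one_sub (measurableSet_event L hmeas _ _),
      tail_eq L hmeas hident, event_cast]
  rw [Finset.prod_congr rfl key]
  have := Finset.prod_range_reflect (fun s => 1 - μ {ω | s < L 0 ω}) g
  exact this

/-- Master independence fact: events depending on disjoint coordinate blocks are independent. -/
lemma master (hmeas : ∀ i, Measurable (L i))
    (hindep : iIndepFun L μ)
    (S T : Finset ℤ) (hST : Disjoint S T) (MS : Set (S → ℕ)) (MT : Set (T → ℕ)) :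
    μ (proj L S ⁻¹' MS ∩ proj L T ⁻¹' MT) = μ (proj L S ⁻¹' MS) * μ (proj L T ⁻¹' MT) :=
  (hindep.indepFun_finset S T hST hmeas).measure_inter_preimage_eq_mul
    MS MT (Set.to_countable _).measurableSet (Set.to_countable _).measurableSet

lemma recursion (hmeas : ∀ i, Measurable (L i))
    (hindep : iIndepFun L μ)
    (hident : ∀ i, IdentDistrib (L i) (L 0) μ μ) (n g : ℕ) (hg : 1 ≤ g) :
    μ (A L (n + g)) ≤
      μ (A L n) * (1 - ∏ s ∈ Finset.range g, (1 - μ {ω | s < L 0 ω}))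
      + ∑ k ∈ Finset.range n, μ (A L k) * μ {ω | (n + g - 1 - k : ℕ) < L 0 ω} := by
  have step1 : μ (A L (n + g)) ≤ μ (A L n ∩ Near L n g) +
      ∑ k ∈ Finset.range n,
        μ (A L k ∩ {ω | (n : ℤ) + g - 1 - k < (L (-(k : ℤ)) ω : ℤ)}) := by
    refine (measure_mono (incl L n g hg)).trans ?_
    refine (measure_union_le _ _).trans ?_
    gcongr
    exact measure_biUnion_finset_le _ _
  refine step1.trans (add_le_add ?_ ?_)
  · -- near term
    have hnear : μ (A L n ∩ Near L n g) = μ (A L n) * μ (Near L n g) := by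
      conv_lhs => rw [A_eq_preimage, Near_eq_preimage]
      conv_rhs => rw [A_eq_preimage, Near_eq_preimage]
      exact master L hmeas hindep _ _ (disjoint_Sn_Tn n g) _ _
    rw [hnear]
    gcongr
    have hc : μ (Near L n g) = 1 - μ ((Near L n g)ᶜ) := by
      rw [prob_compl_eq_one_sub (measurableSet_Near L hmeas n g)]
      exact (ENNReal.sub_sub_cancel ENNReal.one_ne_top prob_le_one).symm
    rw [hc, measure_Near_compl L hmeas hindep hident n g]
  · -- far terms
    refine Finset.sum_le_sum fun k hk => ?_
    rw [Finset.mem_range] at hk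
    have hfar : μ (A L k ∩ {ω | (n : ℤ) + g - 1 - k < (L (-(k : ℤ)) ω : ℤ)})
        = μ (A L k) * μ {ω | (n : ℤ) + g - 1 - k < (L (-(k : ℤ)) ω : ℤ)} := by
      conv_lhs => rw [A_eq_preimage, F_eq_preimage L (-(k : ℤ)) ((n : ℤ) + g - 1 - k)]
      conv_rhs => rw [A_eq_preimage, F_eq_preimage L (-(k : ℤ)) ((n : ℤ) + g - 1 - k)]
      exact master L hmeas hindep _ _ (disjoint_Sn_singleton k) _ _
    have hz : (n : ℤ) + g - 1 - k = ((n + g - 1 - k : ℕ) : ℤ) := by push_cast; omega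
    have heq : μ {ω | (n : ℤ) + g - 1 - k < (L (-(k : ℤ)) ω : ℤ)}
        = μ {ω | n + g - 1 - k < L 0 ω} := by
      rw [hz, tail_eq L hmeas hident, event_cast]
    rw [hfar, heq]

end Measure


/-- one-sided Weierstrass inequality -/
lemma weier (f : ℕ → ℝ) : ∀ (s : Finset ℕ), (∀ i ∈ s, 0 ≤ f i) → (∀ i ∈ s, f i ≤ 1) →
    1 - ∑ i ∈ s, f i ≤ ∏ i ∈ s, (1 - f i) := by
  intro s
  induction s using Finset.induction with
  | empty => simp
  | @insert a s' hns ih =>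
    intro h0 h1
    rw [Finset.sum_insert hns, Finset.prod_insert hns]
    have ih' := ih (fun i hi => h0 i (Finset.mem_insert_of_mem hi))
      (fun i hi => h1 i (Finset.mem_insert_of_mem hi))
    have ha0 := h0 a (Finset.mem_insert_self a s')
    have ha1 := h1 a (Finset.mem_insert_self a s')
    have hsum : (0:ℝ) ≤ ∑ i ∈ s', f i :=
      Finset.sum_nonneg (fun i hi => h0 i (Finset.mem_insert_of_mem hi))
    nlinarith [ih']

lemma geom_bdd {d : ℝ} (hd0 : 0 < d) (hd1 : d < 1) (N : ℕ) :
    ∑ i ∈ Finset.range N, d ^ i ≤ 1 / (1 - d) := by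
  rw [geom_sum_eq (ne_of_lt hd1)]
  have h1 : (d ^ N - 1) / (d - 1) = (1 - d ^ N) / (1 - d) := by
    rw [div_eq_div_iff (by linarith) (by linarith)]; ring
  rw [h1]
  have : (0:ℝ) ≤ d ^ N := pow_nonneg hd0.le N
  gcongr
  · linarith

lemma geom_tail {d : ℝ} (hd0 : 0 < d) (hd1 : d < 1) (T g : ℕ) :
    ∑ s ∈ Finset.Ico T g, d ^ s ≤ d ^ T / (1 - d) := by
  rcases le_or_gt T g with h | h
  · rw [Finset.sum_Ico_eq_sum_range]
    have heq : ∀ i ∈ Finset.range (g - T), d ^ (T + i) = d ^ T * d ^ i := fun i _ => pow_add d T i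
    rw [Finset.sum_congr rfl heq, ← Finset.mul_sum, div_eq_mul_one_div]
    exact mul_le_mul_of_nonneg_left (geom_bdd hd0 hd1 _) (pow_nonneg hd0.le T)
  · rw [Finset.Ico_eq_empty (by omega), Finset.sum_empty]
    have h1d : (0:ℝ) < 1 - d := by linarith
    positivity

/-- Solving the renewal-type recursion. -/
lemma solve (q aR : ℕ → ℝ) (D d p0 : ℝ) (hD : 0 < D) (hd0 : 0 < d) (hd1 : d < 1)
    (hp0 : 0 < p0)
    (hq0 : ∀ n, 0 ≤ q n) (hq1 : ∀ n, q n ≤ 1)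
    (ha0 : ∀ t, 0 ≤ aR t) (hap : ∀ t, aR t ≤ 1 - p0) (haD : ∀ t, aR t ≤ D * d ^ t)
    (hrec : ∀ n g, 1 ≤ g → q (n + g) ≤ q n * (1 - ∏ s ∈ range g, (1 - aR s))
        + ∑ k ∈ range n, q k * aR (n + g - 1 - k)) :
    ∃ B : ℝ, 0 < B ∧ ∃ ρ : ℝ, 0 < ρ ∧ ρ < 1 ∧ ∀ n, q n ≤ B * ρ ^ n := by
  have ha1 : ∀ t, aR t ≤ 1 := fun t => (hap t).trans (by linarith)
  -- choose T
  obtain ⟨T, hT⟩ := exists_pow_lt_of_lt_one (show (0:ℝ) < (1 - d) / (2 * D) from div_pos (by linarith) (by positivity)) hd1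
  -- c1
  set c1 : ℝ := ∏ s ∈ range T, (1 - aR s) with hc1def
  have hc1pos : 0 < c1 := Finset.prod_pos (fun s _ => by have := hap s; linarith)
  have hc1le : c1 ≤ 1 := Finset.prod_le_one (fun s _ => by have := ha1 s; linarith)
    (fun s _ => by have := ha0 s; linarith)
  set c : ℝ := c1 / 2 with hcdef
  have hcpos : 0 < c := by positivity
  have hchalf : c ≤ 1 / 2 := by simp only [hcdef]; linarith
  -- uniform product lower bound
  have hProd : ∀ g : ℕ, c ≤ ∏ s ∈ range g, (1 - aR s) := by
    intro g
    rcases le_or_gt g T with h | h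
    · have hsplit := Finset.prod_range_mul_prod_Ico (fun s => 1 - aR s) h
      have h2 : ∏ s ∈ Finset.Ico g T, (1 - aR s) ≤ 1 :=
        Finset.prod_le_one (fun s _ => by have := ha1 s; linarith)
          (fun s _ => by have := ha0 s; linarith)
      have h3 : 0 ≤ ∏ s ∈ range g, (1 - aR s) :=
        Finset.prod_nonneg (fun s _ => by have := hap s; linarith)
      nlinarith [hsplit]
    · have hsplit := Finset.prod_range_mul_prod_Ico (fun s => 1 - aR s) h.le
      have h2 : 1 - ∑ s ∈ Finset.Ico T g, aR s ≤ ∏ s ∈ Finset.Ico T g, (1 - aR s) := by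
        have := weier aR (Finset.Ico T g) (fun i _ => ha0 i) (fun i _ => ha1 i)
        simpa using this
      have h3 : ∑ s ∈ Finset.Ico T g, aR s ≤ 1 / 2 := by
        have hb : ∑ s ∈ Finset.Ico T g, aR s ≤ ∑ s ∈ Finset.Ico T g, D * d ^ s :=
          Finset.sum_le_sum (fun s _ => haD s)
        have hg := geom_tail hd0 hd1 T g
        have : D * (d ^ T / (1 - d)) ≤ 1 / 2 := by
          have h1d : (0:ℝ) < 1 - d := by linarith
          rw [lt_div_iff₀ (by positivity)] at hT
          rw [mul_div_assoc', div_le_iff₀ h1d]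
          nlinarith
        calc ∑ s ∈ Finset.Ico T g, aR s ≤ D * ∑ s ∈ Finset.Ico T g, d ^ s := by
              rw [Finset.mul_sum]; exact hb
        _ ≤ D * (d ^ T / (1 - d)) := mul_le_mul_of_nonneg_left hg hD.le
        _ ≤ 1 / 2 := this
      have h4 : (1:ℝ)/2 ≤ ∏ s ∈ Finset.Ico T g, (1 - aR s) := by linarith
      nlinarith [hsplit, hc1pos]
  -- choose g
  obtain ⟨g0, hg0⟩ := exists_pow_lt_of_lt_one
    (show (0:ℝ) < c * (1 - d) / (8 * D) from div_pos (by nlinarith) (by positivity)) hd1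
  set g : ℕ := g0 + 1 with hgdef
  have hg1 : 1 ≤ g := by omega
  have hgD : D * d ^ g ≤ c * (1 - d) / 8 := by
    have h1 : d ^ g ≤ d ^ g0 := pow_le_pow_of_le_one hd0.le hd1.le (by omega)
    rw [lt_div_iff₀ (by positivity : (0:ℝ) < 8 * D)] at hg0
    rw [le_div_iff₀ (by norm_num : (0:ℝ) < 8)]
    nlinarith
  -- choose ρ
  have hgR : (1:ℝ) ≤ (g:ℝ) := by exact_mod_cast hg1
  have hfrac0 : 0 < 3 * c / (4 * (g:ℝ)) := by positivity
  have hfrac : 3 * c / (4 * (g:ℝ)) ≤ 3 / 8 := by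
    rw [div_le_div_iff₀ (by positivity) (by norm_num)]
    nlinarith
  set ρ : ℝ := max ((1 + d) / 2) (1 - 3 * c / (4 * (g:ℝ))) with hρdef
  have hρ0 : 0 < ρ := lt_of_lt_of_le (by linarith : (0:ℝ) < (1 + d) / 2) (le_max_left _ _)
  have hρ1 : ρ < 1 := max_lt (by linarith) (by linarith)
  have hρd : d < ρ := lt_of_lt_of_le (by linarith : d < (1 + d) / 2) (le_max_left _ _)
  have hρdgap : (1 - d) / 2 ≤ ρ - d := by
    have := le_max_left ((1 + d) / 2) (1 - 3 * c / (4 * (g:ℝ)))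
    have h2 : (1 + d) / 2 ≤ ρ := this
    linarith
  have hbase0 : (0:ℝ) ≤ 1 - 3 * c / (4 * (g:ℝ)) := by linarith
  have hρg : 1 - 3 * c / 4 ≤ ρ ^ g := by
    have hb := one_add_mul_le_pow (show (-2:ℝ) ≤ -(3 * c / (4 * (g:ℝ))) by linarith) g
    have heq : 1 + (g:ℝ) * -(3 * c / (4 * (g:ℝ))) = 1 - 3 * c / 4 := by
      field_simp
      ring
    have hb2 : 1 - 3 * c / 4 ≤ (1 - 3 * c / (4 * (g:ℝ))) ^ g := by
      calc 1 - 3 * c / 4 = 1 + (g:ℝ) * -(3 * c / (4 * (g:ℝ))) := heq.symm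
      _ ≤ (1 + -(3 * c / (4 * (g:ℝ)))) ^ g := hb
      _ = (1 - 3 * c / (4 * (g:ℝ))) ^ g := by ring_nf
    exact hb2.trans (pow_le_pow_left₀ hbase0 (le_max_right _ _) g)
  -- B
  set B : ℝ := (1 / ρ) ^ g with hBdef
  have hB0 : 0 < B := by positivity
  have hBρg : B * ρ ^ g = 1 := by
    rw [hBdef, ← mul_pow, one_div_mul_cancel (ne_of_gt hρ0), one_pow]
  refine ⟨B, hB0, ρ, hρ0, hρ1, ?_⟩
  intro n
  induction n using Nat.strong_induction_on with
  | _ n ih =>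
  rcases le_or_gt n g with hng | hng
  · -- base case
    have h1 : ρ ^ g ≤ ρ ^ n := pow_le_pow_of_le_one hρ0.le hρ1.le hng
    have h2 : (1:ℝ) ≤ B * ρ ^ n := by
      calc (1:ℝ) = B * ρ ^ g := hBρg.symm
      _ ≤ B * ρ ^ n := by nlinarith
    exact (hq1 n).trans h2
  · -- inductive case
    set n' : ℕ := n - g with hn'def
    have hnn' : n = n' + g := by omega
    have hn'1 : 1 ≤ n' := by omega
    have hrec' := hrec n' g hg1
    -- near bound
    have hP1 : ∏ s ∈ range g, (1 - aR s) ≤ 1 :=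
      Finset.prod_le_one (fun s _ => by have := ha1 s; linarith)
        (fun s _ => by have := ha0 s; linarith)
    have hPc := hProd g
    have hihn' : q n' ≤ B * ρ ^ n' := ih n' (by omega)
    have hnear : q n' * (1 - ∏ s ∈ range g, (1 - aR s)) ≤ B * ρ ^ n' * (1 - c) := by
      have h0' : 0 ≤ 1 - ∏ s ∈ range g, (1 - aR s) := by linarith
      have h1' : 1 - ∏ s ∈ range g, (1 - aR s) ≤ 1 - c := by linarith
      have h2' : (0:ℝ) ≤ B * ρ ^ n' := by positivity
      exact mul_le_mul hihn' h1' h0' h2'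
    -- far bound
    have hfar : ∑ k ∈ range n', q k * aR (n' + g - 1 - k)
        ≤ B * D * d ^ g * ∑ k ∈ range n', ρ ^ k * d ^ (n' - 1 - k) := by
      rw [Finset.mul_sum]
      refine Finset.sum_le_sum fun k hk => ?_
      rw [Finset.mem_range] at hk
      have hexp : n' + g - 1 - k = g + (n' - 1 - k) := by omega
      have h1 : q k * aR (n' + g - 1 - k) ≤ (B * ρ ^ k) * (D * d ^ (n' + g - 1 - k)) := by
        have := ih k (by omega)
        have h2 := haD (n' + g - 1 - k)
        have h3 := ha0 (n' + g - 1 - k)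
        have h4 := hq0 k
        have h5 : (0:ℝ) ≤ B * ρ ^ k := by positivity
        exact mul_le_mul this h2 h3 h5
      calc q k * aR (n' + g - 1 - k) ≤ (B * ρ ^ k) * (D * d ^ (n' + g - 1 - k)) := h1
      _ = B * D * d ^ g * (ρ ^ k * d ^ (n' - 1 - k)) := by rw [hexp, pow_add]; ring
    have hS : ∑ k ∈ range n', ρ ^ k * d ^ (n' - 1 - k) ≤ 2 * ρ ^ n' / (1 - d) := by
      have hgap : 0 < ρ - d := by linarith
      have h1d : (0:ℝ) < 1 - d := by linarith
      have hSle : (∑ k ∈ range n', ρ ^ k * d ^ (n' - 1 - k)) * (ρ - d) ≤ ρ ^ n' := by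
        rw [geom_sum₂_mul ρ d n']
        linarith [pow_pos hd0 n']
      have h2 : ∑ k ∈ range n', ρ ^ k * d ^ (n' - 1 - k) ≤ ρ ^ n' / (ρ - d) :=
        (le_div_iff₀ hgap).mpr hSle
      refine h2.trans ?_
      rw [div_le_div_iff₀ hgap h1d]
      nlinarith [pow_pos hρ0 n']
    -- combine
    have hcomb : q (n' + g) ≤ B * ρ ^ n' * (1 - c) + B * D * d ^ g * (2 * ρ ^ n' / (1 - d)) := by
      refine (hrec'.trans (add_le_add hnear hfar)).trans ?_
      have h2' : (0:ℝ) ≤ B * D * d ^ g := by positivity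
      exact add_le_add_right (mul_le_mul_of_nonneg_left hS h2') _
    have hfarfinal : B * D * d ^ g * (2 * ρ ^ n' / (1 - d)) ≤ B * ρ ^ n' * (c / 4) := by
      have h1d : (0:ℝ) < 1 - d := by linarith
      have hpow : (0:ℝ) < ρ ^ n' := pow_pos hρ0 n'
      have key : D * d ^ g * 2 / (1 - d) ≤ c / 4 := by
        rw [div_le_iff₀ h1d]
        nlinarith
      calc B * D * d ^ g * (2 * ρ ^ n' / (1 - d)) = B * ρ ^ n' * (D * d ^ g * 2 / (1 - d)) := by
            field_simp
      _ ≤ B * ρ ^ n' * (c / 4) := mul_le_mul_of_nonneg_left key (by positivity)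
    have hfinal : q (n' + g) ≤ B * ρ ^ n' * (1 - 3 * c / 4) := by
      calc q (n' + g) ≤ B * ρ ^ n' * (1 - c) + B * ρ ^ n' * (c / 4) := by linarith
      _ = B * ρ ^ n' * (1 - 3 * c / 4) := by ring
    calc q n = q (n' + g) := by rw [← hnn']
    _ ≤ B * ρ ^ n' * (1 - 3 * c / 4) := hfinal
    _ ≤ B * ρ ^ n' * ρ ^ g := mul_le_mul_of_nonneg_left hρg (by positivity)
    _ = B * ρ ^ n := by rw [hnn', pow_add]; ring


end Stmt4Aux

open Stmt4Aux in
/-- Let `(L i)_{i ≤ 0}` be i.i.d. `ℕ`-valued with `P(L 0 = 0) > 0`, and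
`Θ[0] = sup{n ≤ 0 : L i ≤ i - n, i = n, …, 0}`.  If `P(L 0 > k)` decays
exponentially fast, then `Θ[0]` has exponential tail: the event `{Θ[0] ≤ -n}`
(no admissible `m` in `(-n, 0]`) has probability at most `D' d'^n`. -/
theorem stmt4 {Ω : Type*} [MeasurableSpace Ω] (μ : Measure Ω) [IsProbabilityMeasure μ]
    (L : ℤ → Ω → ℕ) (hmeas : ∀ i, Measurable (L i))
    (hindep : iIndepFun L μ)
    (hident : ∀ i, IdentDistrib (L i) (L 0) μ μ)
    (h0 : 0 < μ {ω | L 0 ω = 0})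
    (htail : ∃ D : ℝ, 0 < D ∧ ∃ d ∈ Set.Ioo (0 : ℝ) 1, ∀ k : ℕ,
      μ {ω | k < L 0 ω} ≤ ENNReal.ofReal (D * d ^ k)) :
    ∃ D' : ℝ, 0 < D' ∧ ∃ d' ∈ Set.Ioo (0 : ℝ) 1, ∀ n : ℕ, 1 ≤ n →
      μ {ω | ∀ m : ℤ, -(n : ℤ) < m → m ≤ 0 →
          ∃ i : ℤ, m ≤ i ∧ i ≤ 0 ∧ i - m < (L i ω : ℤ)}
        ≤ ENNReal.ofReal (D' * d' ^ n) := by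
  classical
  obtain ⟨D, hD, d, ⟨hd0, hd1⟩, htail⟩ := htail
  set aR : ℕ → ℝ := fun t => (μ {ω | t < L 0 ω}).toReal with haRdef
  set q : ℕ → ℝ := fun n => (μ (A L n)).toReal with hqdef
  have hAfin : ∀ n, μ (A L n) ≠ ⊤ := fun n => measure_ne_top μ _
  have hq0 : ∀ n, 0 ≤ q n := fun n => ENNReal.toReal_nonneg
  have hq1 : ∀ n, q n ≤ 1 := fun n => by
    simpa using ENNReal.toReal_mono ENNReal.one_ne_top (prob_le_one (μ := μ) (s := A L n))
  have ha0 : ∀ t, 0 ≤ aR t := fun t => ENNReal.toReal_nonneg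
  have haD : ∀ t, aR t ≤ D * d ^ t := fun t =>
    ENNReal.toReal_le_of_le_ofReal (by positivity) (htail t)
  -- p0
  have hmeas0 : MeasurableSet {ω | L 0 ω = 0} :=
    (hmeas 0) (show MeasurableSet {x : ℕ | x = 0} from (Set.to_countable _).measurableSet)
  set p0 : ℝ := (μ {ω | L 0 ω = 0}).toReal with hp0def
  have hp0 : 0 < p0 := ENNReal.toReal_pos (ne_of_gt h0) (measure_ne_top μ _)
  have hap : ∀ t, aR t ≤ 1 - p0 := by
    intro t
    have hsub : {ω | t < L 0 ω} ⊆ {ω | L 0 ω = 0}ᶜ := by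
      intro ω hω
      simp only [Set.mem_compl_iff, Set.mem_setOf_eq] at *
      omega
    have h1 : μ {ω | t < L 0 ω} ≤ μ ({ω | L 0 ω = 0}ᶜ) := measure_mono hsub
    have h2 : μ ({ω | L 0 ω = 0}ᶜ) = 1 - μ {ω | L 0 ω = 0} := prob_compl_eq_one_sub hmeas0
    have h3 : (μ ({ω | L 0 ω = 0}ᶜ)).toReal = 1 - p0 := by
      rw [h2, ENNReal.toReal_sub_of_le prob_le_one ENNReal.one_ne_top, ENNReal.toReal_one]
    calc aR t ≤ (μ ({ω | L 0 ω = 0}ᶜ)).toReal :=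
          ENNReal.toReal_mono (measure_ne_top μ _) h1
    _ = 1 - p0 := h3
  -- real recursion
  have hrecR : ∀ n g, 1 ≤ g → q (n + g) ≤ q n * (1 - ∏ s ∈ Finset.range g, (1 - aR s))
      + ∑ k ∈ Finset.range n, q k * aR (n + g - 1 - k) := by
    intro n g hg
    have hE := recursion L hmeas hindep hident n g hg
    have hprod_le_one : ∏ s ∈ Finset.range g, (1 - μ {ω | s < L 0 ω}) ≤ 1 :=
      Finset.prod_le_one' (fun s _ => by
        exact tsub_le_self.trans (le_refl 1))
    have hRHSne : μ (A L n) * (1 - ∏ s ∈ Finset.range g, (1 - μ {ω | s < L 0 ω}))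
        + ∑ k ∈ Finset.range n, μ (A L k) * μ {ω | (n + g - 1 - k : ℕ) < L 0 ω} ≠ ⊤ := by
      refine ENNReal.add_ne_top.2 ⟨?_, ?_⟩
      · exact ENNReal.mul_ne_top (hAfin n)
          (by
            refine ne_of_lt (lt_of_le_of_lt (tsub_le_self.trans (le_refl 1)) ?_)
            exact ENNReal.one_lt_top)
      · refine ne_of_lt (lt_of_le_of_lt (Finset.sum_le_sum fun k _ =>
          (mul_le_mul' (prob_le_one) (prob_le_one))) ?_)
        simp only [mul_one]
        exact lt_of_le_of_lt (Finset.sum_le_card_nsmul _ _ 1 fun k _ => le_refl 1)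
          (by simp)
    have := ENNReal.toReal_mono hRHSne hE
    refine this.trans (le_of_eq ?_)
    rw [ENNReal.toReal_add, ENNReal.toReal_mul, ENNReal.toReal_sum]
    · congr 1
      · congr 1
        rw [ENNReal.toReal_sub_of_le hprod_le_one ENNReal.one_ne_top, ENNReal.toReal_one,
          ENNReal.toReal_prod]
        congr 1
        refine Finset.prod_congr rfl fun s _ => ?_
        rw [ENNReal.toReal_sub_of_le prob_le_one ENNReal.one_ne_top, ENNReal.toReal_one]
      · exact Finset.sum_congr rfl fun k _ => ENNReal.toReal_mul
    · exact fun k _ => ENNReal.mul_ne_top (hAfin k) (measure_ne_top μ _)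
    · exact ENNReal.mul_ne_top (hAfin n)
        (ne_of_lt (lt_of_le_of_lt (tsub_le_self.trans (le_refl 1)) ENNReal.one_lt_top))
    · refine ne_of_lt (lt_of_le_of_lt (Finset.sum_le_sum fun k _ =>
        (mul_le_mul' (prob_le_one) (prob_le_one))) ?_)
      simp only [mul_one]
      exact lt_of_le_of_lt (Finset.sum_le_card_nsmul _ _ 1 fun k _ => le_refl 1)
        (by simp)
  obtain ⟨B, hB0, ρ, hρ0, hρ1, hbound⟩ :=
    solve q aR D d p0 hD hd0 hd1 hp0 hq0 hq1 ha0 hap haD hrecR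
  refine ⟨B, hB0, ρ, ⟨hρ0, hρ1⟩, fun n _ => ?_⟩
  have : μ (A L n) = ENNReal.ofReal (q n) := (ENNReal.ofReal_toReal (hAfin n)).symm
  calc μ (A L n) = ENNReal.ofReal (q n) := this
  _ ≤ ENNReal.ofReal (B * ρ ^ n) := ENNReal.ofReal_le_ofReal (hbound n)
end

section
/- Let $\psi : \mathbb{R} \to (0,1)$ be continuously differentiable and increasing, and $(\theta_n)_{n \ge 0}$ absolutely summable real numbers. Define on $A = \{-1,+1\}$ the kernel $P(1|\underline{a}) = \psi(\theta_0 + \sum_{k\ge 1}\theta_k a_{-k})$. Then for every infinite past $\underline{a}$ and every $k \ge 1$, the continuity coefficient $\omega_k(\underline{a}) := \inf_{\underline{z}} P(1|a_{-k}^{-1}\underline{z}) + \inf_{\underline{z}} P(-1|a_{-k}^{-1}\underline{z})$ equals $1 - 2\psi'(c)\sum_{i\ge k+1}|\theta_i|$ for some $c$ in the interval $[\theta_0 + \sum_{i=1}^k a_{-i}\theta_i - r_k,\ \theta_0 + \sum_{i=1}^k a_{-i}\theta_i + r_k]$ where $r_k = \sum_{i\ge k+1}|\theta_i|$. In particular $\omega_k(\underline{a})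 \to 1$ as $k \to \infty$, so $P$ is continuous at every past. -/
namespace Stmt11

/-- A past over `A = {-1,+1}` is `a : ℕ → ℝ` with `a k` the symbol at position
`-(k+1)`; `pm a` says the symbols are `±1`. -/
def pm (a : ℕ → ℝ) : Prop := ∀ j, a j = -1 ∨ a j = 1

/-- The binary autoregressive kernel: `P(1|ā) = ψ(θ₀ + ∑_{k≥1} θ_k a_{-k})`. -/
noncomputable def P1 (ψ : ℝ → ℝ) (θ : ℕ → ℝ) (a : ℕ → ℝ) : ℝ :=
  ψ (θ 0 + ∑' k : ℕ, θ (k + 1) * a k)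

/-- The past `a_{-k}^{-1} z̲`: the `k` most recent symbols from `a`, then `z`. -/
def glue (k : ℕ) (a z : ℕ → ℝ) : ℕ → ℝ := fun j => if j < k then a j else z (j - k)

/-- `ω_k(ā) = inf_z P(1|a_{-k}^{-1}z̲) + inf_z P(-1|a_{-k}^{-1}z̲)`. -/
noncomputable def omegaK (ψ : ℝ → ℝ) (θ : ℕ → ℝ) (k : ℕ) (a : ℕ → ℝ) : ℝ :=
  sInf {x | ∃ z, pm z ∧ x = P1 ψ θ (glue k a z)} +
    sInf {x | ∃ z, pm z ∧ x = 1 - P1 ψ θ (glue k a z)}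

lemma pm_abs {a : ℕ → ℝ} (ha : pm a) (j : ℕ) : |a j| = 1 := by
  rcases ha j with h | h <;> simp [h]

lemma pm_glue {a z : ℕ → ℝ} (ha : pm a) (hz : pm z) (k : ℕ) : pm (glue k a z) := by
  intro j; unfold glue
  by_cases h : j < k <;> simp [h, ha j, hz (j - k)]

lemma summable_tail {θ : ℕ → ℝ} (hθ : Summable fun n => |θ n|) (m : ℕ) :
    Summable (fun i => |θ (m + i)|) := by
  have := (summable_nat_add_iff (f := fun n => |θ n|) m).2 hθ
  simpa [add_comm] using this

lemma summable_mul {θ : ℕ → ℝ} {b : ℕ → ℝ} (hθ : Summable fun n => |θ n|)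
    (hb : pm b) (m : ℕ) : Summable (fun j => θ (m + j) * b j) := by
  refine Summable.of_abs ?_
  have : (fun j => |θ (m + j) * b j|) = fun j => |θ (m + j)| := by
    funext j; rw [abs_mul, pm_abs hb, mul_one]
  rw [this]; exact summable_tail hθ m

lemma P1_glue {ψ : ℝ → ℝ} {θ : ℕ → ℝ} (hθ : Summable fun n => |θ n|)
    {a z : ℕ → ℝ} (ha : pm a) (hz : pm z) (k : ℕ) :
    P1 ψ θ (glue k a z)
      = ψ (θ 0 + (∑ i ∈ Finset.range k, θ (i + 1) * a i + ∑' j, θ (k + 1 + j) * z j)) := by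
  unfold P1
  congr 2
  have hsum : Summable (fun j => θ (j + 1) * glue k a z j) := by
    have := summable_mul hθ (pm_glue ha hz k) 1
    simpa [add_comm] using this
  rw [← Summable.sum_add_tsum_nat_add k hsum]
  congr 1
  · refine Finset.sum_congr rfl fun i hi => ?_
    have : i < k := Finset.mem_range.1 hi
    simp [glue, this]
  · refine tsum_congr fun j => ?_
    have h1 : ¬ (j + k < k) := by omega
    have h2 : j + k - k = j := by omega
    have h3 : j + k + 1 = k + 1 + j := by omega
    simp [glue, h1, h2, h3]

lemma tail_bound {θ : ℕ → ℝ} (hθ : Summable fun n => |θ n|) {z : ℕ → ℝ}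
    (hz : pm z) (k : ℕ) :
    |∑' j, θ (k + 1 + j) * z j| ≤ ∑' i, |θ (k + 1 + i)| := by
  have h1 : Summable (fun j => ‖θ (k + 1 + j) * z j‖) := by
    simp only [Real.norm_eq_abs]
    have : (fun j => |θ (k + 1 + j) * z j|) = fun j => |θ (k + 1 + j)| := by
      funext j; rw [abs_mul, pm_abs hz, mul_one]
    rw [this]; exact summable_tail hθ (k + 1)
  have := norm_tsum_le_tsum_norm h1
  simp only [Real.norm_eq_abs] at this
  calc |∑' j, θ (k + 1 + j) * z j| ≤ ∑' j, |θ (k + 1 + j) * z j| := this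
    _ = ∑' i, |θ (k + 1 + i)| := by
        refine tsum_congr fun j => ?_
        rw [abs_mul, pm_abs hz, mul_one]

/-- Extremal tails. -/
lemma exists_tail_eq {θ : ℕ → ℝ} (hθ : Summable fun n => |θ n|) (k : ℕ) (s : ℝ)
    (hs : s = 1 ∨ s = -1) :
    ∃ z, pm z ∧ ∑' j, θ (k + 1 + j) * z j = s * ∑' i, |θ (k + 1 + i)| := by
  refine ⟨fun j => if 0 ≤ θ (k + 1 + j) then s else -s, fun j => ?_, ?_⟩
  · rcases hs with rfl | rfl <;> by_cases h : 0 ≤ θ (k + 1 + j) <;> simp [h]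
  · have : (fun j => θ (k + 1 + j) * if 0 ≤ θ (k + 1 + j) then s else -s)
        = fun j => s * |θ (k + 1 + j)| := by
      funext j
      by_cases h : 0 ≤ θ (k + 1 + j)
      · simp [h, abs_of_nonneg h]; ring
      · push_neg at h
        simp [not_le.2 h, abs_of_neg h]; ring
    rw [this, tsum_mul_left]

lemma omega_eq {ψ : ℝ → ℝ} {θ : ℕ → ℝ} (hψmono : StrictMono ψ)
    (hθ : Summable fun n => |θ n|) {a : ℕ → ℝ} (ha : pm a) (k : ℕ) :
    omegaK ψ θ k a
      = ψ (θ 0 + ∑ i ∈ Finset.range k, θ (i + 1) * a i - ∑' i, |θ (k + 1 + i)|)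
        + (1 - ψ (θ 0 + ∑ i ∈ Finset.range k, θ (i + 1) * a i + ∑' i, |θ (k + 1 + i)|)) := by
  set S := θ 0 + ∑ i ∈ Finset.range k, θ (i + 1) * a i with hS
  set r := ∑' i, |θ (k + 1 + i)| with hr
  have hSr : ∀ z, pm z → P1 ψ θ (glue k a z) = ψ (S + ∑' j, θ (k + 1 + j) * z j) := by
    intro z hz
    rw [P1_glue hθ ha hz k, hS]; congr 1; ring
  obtain ⟨zneg, hzneg, hneg⟩ := exists_tail_eq hθ k (-1) (Or.inr rfl)
  obtain ⟨zpos, hzpos, hpos⟩ := exists_tail_eq hθ k 1 (Or.inl rfl)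
  have h1 : IsLeast {x | ∃ z, pm z ∧ x = P1 ψ θ (glue k a z)} (ψ (S - r)) := by
    constructor
    · exact ⟨zneg, hzneg, by rw [hSr zneg hzneg, hneg]; congr 1; rw [hr]; ring⟩
    · rintro x ⟨z, hz, rfl⟩
      rw [hSr z hz]
      refine hψmono.monotone ?_
      have := (abs_le.1 (tail_bound hθ hz k)).1
      linarith [this]
  have h2 : IsLeast {x | ∃ z, pm z ∧ x = 1 - P1 ψ θ (glue k a z)} (1 - ψ (S + r)) := by
    constructor
    · refine ⟨zpos, hzpos, ?_⟩
      rw [hSr zpos hzpos, hpos]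
      have : S + 1 * ∑' i, |θ (k + 1 + i)| = S + r := by rw [hr]; ring
      rw [this]
    · rintro x ⟨z, hz, rfl⟩
      rw [hSr z hz]
      have hle : ψ (S + ∑' j, θ (k + 1 + j) * z j) ≤ ψ (S + r) := by
        refine hψmono.monotone ?_
        have := (abs_le.1 (tail_bound hθ hz k)).2
        linarith [this]
      linarith
  rw [omegaK, h1.csInf_eq, h2.csInf_eq]

/-- For the binary AR kernel with `ψ` continuously differentiable increasing into
`(0,1)` and `(θ_n)` absolutely summable, for every `±1`-past `ā` and `k ≥ 1` there
is `c ∈ [θ₀ + ∑_{i=1}^k a_{-i}θ_i - r_k, θ₀ + ∑_{i=1}^k a_{-i}θ_i + r_k]` with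
`ω_k(ā) = 1 - 2 ψ'(c) r_k`, where `r_k = ∑_{i ≥ k+1}|θ_i|`; in particular
`ω_k(ā) → 1`, so `P` is continuous at every past. -/
theorem stmt11 (ψ : ℝ → ℝ) (hψdiff : ContDiff ℝ 1 ψ) (hψmono : StrictMono ψ)
    (hψrange : ∀ x, ψ x ∈ Set.Ioo (0 : ℝ) 1)
    (θ : ℕ → ℝ) (hθ : Summable fun n => |θ n|) :
    ∀ a : ℕ → ℝ, pm a →
      (∀ k : ℕ, 1 ≤ k →
        ∃ c ∈ Set.Icc
            (θ 0 + ∑ i ∈ Finset.range k, θ (i + 1) * a i - ∑' i : ℕ, |θ (k + 1 + i)|)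
            (θ 0 + ∑ i ∈ Finset.range k, θ (i + 1) * a i + ∑' i : ℕ, |θ (k + 1 + i)|),
          omegaK ψ θ k a = 1 - 2 * deriv ψ c * ∑' i : ℕ, |θ (k + 1 + i)|) ∧
      Filter.Tendsto (fun k => omegaK ψ θ k a) Filter.atTop (nhds 1) := by
  intro a ha
  have hψd : Differentiable ℝ ψ := hψdiff.differentiable one_ne_zero
  have key : ∀ k : ℕ, omegaK ψ θ k a
      = ψ (θ 0 + ∑ i ∈ Finset.range k, θ (i + 1) * a i - ∑' i, |θ (k + 1 + i)|)
        + (1 - ψ (θ 0 + ∑ i ∈ Finset.range k, θ (i + 1) * a i + ∑' i, |θ (k + 1 + i)|)) :=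
    fun k => omega_eq hψmono hθ ha k
  constructor
  · intro k _
    set S := θ 0 + ∑ i ∈ Finset.range k, θ (i + 1) * a i with hS
    set r := ∑' i, |θ (k + 1 + i)| with hr
    have hr0 : 0 ≤ r := tsum_nonneg (fun i => abs_nonneg _)
    rcases eq_or_lt_of_le hr0 with h | h
    · refine ⟨S, ⟨by linarith, by linarith⟩, ?_⟩
      rw [key k, ← hS, ← hr, ← h]
      simp only [sub_zero, add_zero, mul_zero]
      ring
    · obtain ⟨c, hc, hslope⟩ := exists_hasDerivAt_eq_slope ψ (deriv ψ)
        (show S - r < S + r by linarith)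
        (hψd.continuous.continuousOn)
        (fun x _ => (hψd x).hasDerivAt)
      refine ⟨c, ⟨hc.1.le, hc.2.le⟩, ?_⟩
      have hne : (S + r) - (S - r) ≠ 0 := by linarith
      have : deriv ψ c * ((S + r) - (S - r)) = ψ (S + r) - ψ (S - r) := by
        rw [hslope]; field_simp
      rw [key k, ← hS, ← hr]
      nlinarith [this]
  · -- tendsto
    have hg : Summable (fun i => θ (i + 1) * a i) := by
      have := summable_mul hθ ha 1
      simpa [add_comm] using this
    have hSt : Filter.Tendsto (fun k => θ 0 + ∑ i ∈ Finset.range k, θ (i + 1) * a i)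
        Filter.atTop (nhds (θ 0 + ∑' i, θ (i + 1) * a i)) :=
      Filter.Tendsto.const_add _ hg.hasSum.tendsto_sum_nat
    have hrt : Filter.Tendsto (fun k => ∑' i, |θ (k + 1 + i)|) Filter.atTop (nhds 0) := by
      have h1 : Filter.Tendsto (fun m => ∑' i, |θ (i + m)|) Filter.atTop (nhds 0) :=
        tendsto_sum_nat_add (fun n => |θ n|)
      have h2 : Filter.Tendsto (fun k : ℕ => k + 1) Filter.atTop Filter.atTop :=
        Filter.tendsto_add_atTop_nat 1
      have := h1.comp h2
      refine this.congr fun k => ?_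
      simp only [Function.comp]
      exact tsum_congr fun i => by ring_nf
    set L := θ 0 + ∑' i, θ (i + 1) * a i with hL
    have hcont := hψdiff.continuous
    have t1 : Filter.Tendsto
        (fun k => ψ (θ 0 + ∑ i ∈ Finset.range k, θ (i + 1) * a i - ∑' i, |θ (k + 1 + i)|))
        Filter.atTop (nhds (ψ L)) := by
      refine (hcont.tendsto L).comp ?_
      simpa using hSt.sub hrt
    have t2 : Filter.Tendsto
        (fun k => ψ (θ 0 + ∑ i ∈ Finset.range k, θ (i + 1) * a i + ∑' i, |θ (k + 1 + i)|))
        Filter.atTop (nhds (ψ L)) := by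
      refine (hcont.tendsto L).comp ?_
      simpa using hSt.add hrt
    have := t1.add ((tendsto_const_nhds (x := (1:ℝ))).sub t2)
    have heq : ψ L + (1 - ψ L) = 1 := by ring
    rw [heq] at this
    refine this.congr fun k => ?_
    exact (key k).symm



end Stmt11
end

section
/- In the binary autoregressive model $P(1|\underline{a}) = \psi(\theta_0 + \sum_{k\ge1}\theta_k a_{-k})$ with $\psi$ continuously differentiable, increasing, $(\theta_n)$ absolutely summable, the uniform bounds $1 - 2c\, r_k \le \omega_k(\underline{a}) \le 1 - 2C\, r_k$ hold for all pasts $\underline{a}$ and all $k$, where $r_k = \sum_{i\ge k+1}|\theta_i|$, $c = \sup \psi'$ over the relevant compact interval and $C = \inf \psi'$ over it. Hence the continuity rate is the same (up to constants) for every past. -/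
namespace Stmt12

def pm (a : ℕ → ℝ) : Prop := ∀ j, a j = -1 ∨ a j = 1

noncomputable def P1 (ψ : ℝ → ℝ) (θ : ℕ → ℝ) (a : ℕ → ℝ) : ℝ :=
  ψ (θ 0 + ∑' k : ℕ, θ (k + 1) * a k)

def glue (k : ℕ) (a z : ℕ → ℝ) : ℕ → ℝ := fun j => if j < k then a j else z (j - k)

noncomputable def omegaK (ψ : ℝ → ℝ) (θ : ℕ → ℝ) (k : ℕ) (a : ℕ → ℝ) : ℝ :=
  sInf {x | ∃ z, pm z ∧ x = P1 ψ θ (glue k a z)} +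
    sInf {x | ∃ z, pm z ∧ x = 1 - P1 ψ θ (glue k a z)}

/-- In the binary AR model, with `r_k = ∑_{i ≥ k+1}|θ_i|`,
`c = sup ψ'` and `C = inf ψ'` over the compact interval
`[θ₀ - ∑_{i≥1}|θ_i|, θ₀ + ∑_{i≥1}|θ_i|]`, the uniform bounds
`1 - 2 c r_k ≤ ω_k(ā) ≤ 1 - 2 C r_k` hold for every `±1`-past and every `k`:
the continuity rate is the same, up to constants, for every past. -/
theorem stmt12 (ψ : ℝ → ℝ) (hψdiff : ContDiff ℝ 1 ψ) (hψmono : StrictMono ψ)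
    (hψrange : ∀ x, ψ x ∈ Set.Ioo (0 : ℝ) 1)
    (θ : ℕ → ℝ) (hθ : Summable fun n => |θ n|) :
    ∀ a : ℕ → ℝ, pm a → ∀ k : ℕ,
      1 - 2 * sSup (deriv ψ ''
            Set.Icc (θ 0 - ∑' i : ℕ, |θ (i + 1)|) (θ 0 + ∑' i : ℕ, |θ (i + 1)|)) *
          (∑' i : ℕ, |θ (k + 1 + i)|)
        ≤ omegaK ψ θ k a ∧
      omegaK ψ θ k a
        ≤ 1 - 2 * sInf (deriv ψ ''
            Set.Icc (θ 0 - ∑' i : ℕ, |θ (i + 1)|) (θ 0 + ∑' i : ℕ, |θ (i + 1)|)) *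
          (∑' i : ℕ, |θ (k + 1 + i)|) := by
  classical
  intro a ha k
  set R : ℝ := ∑' i : ℕ, |θ (i + 1)| with hR
  set rk : ℝ := ∑' i : ℕ, |θ (k + 1 + i)| with hrk
  set A : ℝ := θ 0 + ∑ j ∈ Finset.range k, θ (j + 1) * a j with hA
  have hpmabs : ∀ z : ℕ → ℝ, pm z → ∀ j, |z j| = 1 := by
    intro z hz j; rcases hz j with h | h <;> simp [h]
  have habs : ∀ m : ℕ, Summable fun i => |θ (m + i)| := fun m =>
    ((summable_nat_add_iff m).mpr hθ).congr (fun i => by rw [Nat.add_comm])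
  have hsummul : ∀ z : ℕ → ℝ, pm z → Summable fun i => θ (k + 1 + i) * z i := by
    intro z hz
    refine Summable.of_abs ((habs (k + 1)).congr ?_)
    intro i; rw [abs_mul, hpmabs z hz i, mul_one]
  -- bound on the tail sum
  have hTle : ∀ z : ℕ → ℝ, pm z → |∑' i, θ (k + 1 + i) * z i| ≤ rk := by
    intro z hz
    have h1 : ‖∑' i, θ (k + 1 + i) * z i‖ ≤ ∑' i, ‖θ (k + 1 + i) * z i‖ :=
      norm_tsum_le_tsum_norm
        (by simpa [Real.norm_eq_abs, abs_mul, hpmabs z hz] using habs (k + 1))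
    rw [hrk]
    calc |∑' i, θ (k + 1 + i) * z i| ≤ ∑' i, ‖θ (k + 1 + i) * z i‖ := h1
      _ = ∑' i, |θ (k + 1 + i)| :=
        tsum_congr fun i => by rw [Real.norm_eq_abs, abs_mul, hpmabs z hz i, mul_one]
  -- the key formula for P1 on glued sequences
  have hP : ∀ z : ℕ → ℝ, pm z →
      P1 ψ θ (glue k a z) = ψ (A + ∑' i, θ (k + 1 + i) * z i) := by
    intro z hz
    have hg : pm (glue k a z) := by
      intro j; unfold glue; split
      · exact ha j
      · exact hz _
    have hs : Summable fun j => θ (j + 1) * glue k a z j := by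
      refine Summable.of_abs ((habs 1).congr ?_)
      intro i
      rw [abs_mul, hpmabs _ hg i, mul_one, Nat.add_comm]
    have e1 : ∀ j ∈ Finset.range k, θ (j + 1) * glue k a z j = θ (j + 1) * a j := by
      intro j hj
      unfold glue; rw [if_pos (Finset.mem_range.mp hj)]
    have e2 : ∀ i : ℕ, θ (i + k + 1) * glue k a z (i + k) = θ (k + 1 + i) * z i := by
      intro i
      have hgl : glue k a z (i + k) = z i := by
        unfold glue; rw [if_neg (by omega), Nat.add_sub_cancel]
      rw [hgl, show i + k + 1 = k + 1 + i from by omega]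
    have h1 : (∑ j ∈ Finset.range k, θ (j + 1) * glue k a z j) +
        (∑' i, θ (i + k + 1) * glue k a z (i + k)) = ∑' j, θ (j + 1) * glue k a z j :=
      Summable.sum_add_tsum_nat_add k hs
    unfold P1
    congr 1
    rw [← h1, Finset.sum_congr rfl e1, tsum_congr e2, hA]
    ring
  -- value at extremal z
  have hpoint : ∀ i : ℕ,
      θ (k + 1 + i) * (if 0 ≤ θ (k + 1 + i) then (-1 : ℝ) else 1) = -|θ (k + 1 + i)| := by
    intro i; by_cases h : 0 ≤ θ (k + 1 + i)
    · rw [if_pos h, abs_of_nonneg h]; ring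
    · rw [if_neg h, abs_of_neg (lt_of_not_ge h)]; ring
  have hpoint' : ∀ i : ℕ,
      θ (k + 1 + i) * (if 0 ≤ θ (k + 1 + i) then (1 : ℝ) else -1) = |θ (k + 1 + i)| := by
    intro i; by_cases h : 0 ≤ θ (k + 1 + i)
    · rw [if_pos h, abs_of_nonneg h]; ring
    · rw [if_neg h, abs_of_neg (lt_of_not_ge h)]; ring
  have hzm : pm fun i => if 0 ≤ θ (k + 1 + i) then (-1 : ℝ) else 1 := by
    intro i; dsimp only; split
    · exact Or.inl rfl
    · exact Or.inr rfl
  have hzp : pm fun i => if 0 ≤ θ (k + 1 + i) then (1 : ℝ) else -1 := by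
    intro i; dsimp only; split
    · exact Or.inr rfl
    · exact Or.inl rfl
  have hTm : (∑' i, θ (k + 1 + i) * (if 0 ≤ θ (k + 1 + i) then (-1 : ℝ) else 1)) = -rk := by
    rw [tsum_congr hpoint, tsum_neg, hrk]
  have hTp : (∑' i, θ (k + 1 + i) * (if 0 ≤ θ (k + 1 + i) then (1 : ℝ) else -1)) = rk := by
    rw [tsum_congr hpoint', hrk]
  -- the two infima
  have hleast1 : IsLeast {x | ∃ z, pm z ∧ x = P1 ψ θ (glue k a z)} (ψ (A - rk)) := by
    constructor
    · refine ⟨_, hzm, ?_⟩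
      rw [hP _ hzm]
      congr 1
      rw [hTm]; ring
    · rintro x ⟨z, hz, rfl⟩
      rw [hP _ hz]
      refine hψmono.monotone ?_
      have h1 := (abs_le.mp (hTle z hz)).1
      linarith
  have hleast2 : IsLeast {x | ∃ z, pm z ∧ x = 1 - P1 ψ θ (glue k a z)} (1 - ψ (A + rk)) := by
    constructor
    · refine ⟨_, hzp, ?_⟩
      rw [hP _ hzp]
      congr 2
      rw [hTp]
    · rintro x ⟨z, hz, rfl⟩
      rw [hP _ hz]
      have h1 := (abs_le.mp (hTle z hz)).2
      have h2 : ψ (A + ∑' i, θ (k + 1 + i) * z i) ≤ ψ (A + rk) :=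
        hψmono.monotone (by linarith)
      linarith
  have homega : omegaK ψ θ k a = ψ (A - rk) + (1 - ψ (A + rk)) := by
    unfold omegaK
    rw [hleast1.csInf_eq, hleast2.csInf_eq]
  -- the interval containment
  have hrknn : (0 : ℝ) ≤ rk := by
    rw [hrk]; exact tsum_nonneg fun i => abs_nonneg _
  have hsplitabs : (∑ j ∈ Finset.range k, |θ (j + 1)|) + rk = R := by
    have h1 : (∑ j ∈ Finset.range k, |θ (j + 1)|) + (∑' i, |θ (i + k + 1)|) =
        ∑' i, |θ (i + 1)| := Summable.sum_add_tsum_nat_add k ((summable_nat_add_iff 1).mpr hθ)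
    rw [hR, hrk, ← h1]
    congr 1
    exact tsum_congr fun i => by rw [show k + 1 + i = i + k + 1 from by omega]
  have hAabs : |A - θ 0| ≤ R - rk := by
    have h4 : A - θ 0 = ∑ j ∈ Finset.range k, θ (j + 1) * a j := by rw [hA]; ring
    rw [h4]
    calc |∑ j ∈ Finset.range k, θ (j + 1) * a j|
        ≤ ∑ j ∈ Finset.range k, |θ (j + 1) * a j| := Finset.abs_sum_le_sum_abs _ _
      _ = ∑ j ∈ Finset.range k, |θ (j + 1)| :=
        Finset.sum_congr rfl fun j _ => by rw [abs_mul, hpmabs a ha j, mul_one]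
      _ = R - rk := by linarith
  have hlo : θ 0 - R ≤ A - rk := by
    have := (abs_le.mp hAabs).1; linarith
  have hhi : A + rk ≤ θ 0 + R := by
    have := (abs_le.mp hAabs).2; linarith
  -- compactness of the image of the derivative
  have hcont : Continuous (deriv ψ) := hψdiff.continuous_deriv le_rfl
  have hK : IsCompact (deriv ψ '' Set.Icc (θ 0 - R) (θ 0 + R)) :=
    isCompact_Icc.image hcont
  rcases eq_or_lt_of_le hrknn with h0 | h0
  · constructor <;> (rw [homega, ← h0]; norm_num)
  · obtain ⟨ξ, hξ, hslope⟩ := exists_deriv_eq_slope ψ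
      (show A - rk < A + rk by linarith) hψdiff.continuous.continuousOn
      ((hψdiff.differentiable one_ne_zero).differentiableOn)
    have hξmem : ξ ∈ Set.Icc (θ 0 - R) (θ 0 + R) :=
      ⟨le_trans hlo hξ.1.le, le_trans hξ.2.le hhi⟩
    have hmemim : deriv ψ ξ ∈ deriv ψ '' Set.Icc (θ 0 - R) (θ 0 + R) := ⟨ξ, hξmem, rfl⟩
    have hub := le_csSup hK.bddAbove hmemim
    have hlb := csInf_le hK.bddBelow hmemim
    have hdiff : ψ (A + rk) - ψ (A - rk) = deriv ψ ξ * (2 * rk) := by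
      rw [hslope, div_mul_eq_mul_div, show A + rk - (A - rk) = 2 * rk from by ring,
        mul_div_assoc, div_self (ne_of_gt (by positivity)), mul_one]
    rw [homega]
    have hprod1 : deriv ψ ξ * (2 * rk) ≤
        sSup (deriv ψ '' Set.Icc (θ 0 - R) (θ 0 + R)) * (2 * rk) :=
      mul_le_mul_of_nonneg_right hub (by linarith)
    have hprod2 : sInf (deriv ψ '' Set.Icc (θ 0 - R) (θ 0 + R)) * (2 * rk) ≤
        deriv ψ ξ * (2 * rk) :=
      mul_le_mul_of_nonneg_right hlb (by linarith)
    constructor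
    · linarith [hprod1, hdiff]
    · linarith [hprod2, hdiff]

end Stmt12
end

section
/- Consider the kernel on $A=\{-1,1\}$ given by $P(1|-\underline{1}) = \epsilon \in (0,1/2)$ and, for $\underline{a} \ne -\underline{1}$ with $\mathcal{L}(\underline{a}) := \inf\{i\ge1 : a_{-i}=1\}$, $P(a|\underline{a}) = \epsilon + (1-2\epsilon)\sum_{n\ge1}\mathbf{1}\{a = a_{-\mathcal{L}(\underline{a})-n}\} q_n^{\mathcal{L}(\underline{a})}$, where each $(q_n^l)_{n\ge1}$ is a probability distribution. Then $\omega_k(-\underline{1}) = 2\epsilon < 1$ for every $k$, so $P$ is discontinuous at $-\underline{1}$. -/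
namespace Stmt13

open scoped Classical

/-- Pasts over `A = {-1,1}` encoded as `b : ℕ → Bool` (`b k` the symbol at
position `-(k+1)`, `true` = `1`).  The kernel: `P(1|-1̲) = ε` and for
`ā ≠ -1̲` with `𝓛(ā) = inf{i ≥ 1 : a_{-i} = 1}`,
`P(a|ā) = ε + (1-2ε) ∑_{n≥1} 1{a = a_{-𝓛(ā)-n}} q_n^{𝓛(ā)}`. -/
noncomputable def Pker (ε : ℝ) (q : ℕ → ℕ → ℝ) (a : Bool) (b : ℕ → Bool) : ℝ :=
  if ∃ i, b i = true then
    ε + (1 - 2 * ε) *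
      ∑' n : ℕ, (if b (sInf {i | b i = true} + 1 + n) = a
        then q (sInf {i | b i = true} + 1) (n + 1) else 0)
  else (if a then ε else 1 - ε)

/-- The past `(-1)^k z̲`. -/
def glue (k : ℕ) (z : ℕ → Bool) : ℕ → Bool := fun j => if j < k then false else z (j - k)

/-- `ω_k(-1̲) = ∑_a inf_z P(a|(-1)^k z̲)`. -/
noncomputable def omegaK (ε : ℝ) (q : ℕ → ℕ → ℝ) (k : ℕ) : ℝ :=
  sInf {x | ∃ z : ℕ → Bool, x = Pker ε q true (glue k z)} +
    sInf {x | ∃ z : ℕ → Bool, x = Pker ε q false (glue k z)}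

lemma Pker_ge (ε : ℝ) (hε : ε ∈ Set.Ioo (0 : ℝ) (1 / 2))
    (q : ℕ → ℕ → ℝ) (hqpos : ∀ l n : ℕ, 1 ≤ l → 1 ≤ n → 0 ≤ q l n)
    (a : Bool) (b : ℕ → Bool) : ε ≤ Pker ε q a b := by
  obtain ⟨hε0, hε2⟩ := hε
  unfold Pker
  split_ifs with h ha
  · have ht : 0 ≤ ∑' n : ℕ, (if b (sInf {i | b i = true} + 1 + n) = a
        then q (sInf {i | b i = true} + 1) (n + 1) else 0) := by
      apply tsum_nonneg
      intro n
      split_ifs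
      · exact hqpos _ _ (Nat.le_add_left 1 _) (Nat.le_add_left 1 _)
      · exact le_rfl
    nlinarith
  · exact le_rfl
  · linarith

/-- For this kernel, `ω_k(-1̲) = 2ε < 1` for every `k`, so `P` is discontinuous
at the all-`(-1)` past. -/
theorem stmt13 (ε : ℝ) (hε : ε ∈ Set.Ioo (0 : ℝ) (1 / 2))
    (q : ℕ → ℕ → ℝ) (hqpos : ∀ l n : ℕ, 1 ≤ l → 1 ≤ n → 0 ≤ q l n)
    (hqsum : ∀ l : ℕ, 1 ≤ l → HasSum (fun n : ℕ => q l (n + 1)) 1) :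
    ∀ k : ℕ, omegaK ε q k = 2 * ε ∧ 2 * ε < 1 := by
  intro k
  obtain ⟨hε0, hε2⟩ := hε
  have hlb : ∀ a : Bool, ∀ x ∈ {x | ∃ z : ℕ → Bool, x = Pker ε q a (glue k z)}, ε ≤ x := by
    rintro a x ⟨z, rfl⟩
    exact Pker_ge ε ⟨hε0, hε2⟩ q hqpos a (glue k z)
  -- membership for a = true : z = all false
  have hmem_t : ε ∈ {x | ∃ z : ℕ → Bool, x = Pker ε q true (glue k z)} := by
    refine ⟨fun _ => false, ?_⟩
    have hno : ¬ ∃ i, glue k (fun _ => false) i = true := by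
      rintro ⟨i, hi⟩
      simp [glue] at hi
    simp [Pker, hno]
  -- membership for a = false : z = all true
  have hmem_f : ε ∈ {x | ∃ z : ℕ → Bool, x = Pker ε q false (glue k z)} := by
    refine ⟨fun _ => true, ?_⟩
    have hb : ∀ i, glue k (fun _ => true) i = true ↔ k ≤ i := by
      intro i
      simp [glue]
    have hset : {i | glue k (fun _ => true) i = true} = Set.Ici k := by
      ext i; simpa using hb i
    have hex : ∃ i, glue k (fun _ => true) i = true := ⟨k, (hb k).mpr le_rfl⟩
    have hinf : sInf {i | glue k (fun _ => true) i = true} = k := by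
      rw [hset]; exact csInf_Ici
    have hterm : ∀ n : ℕ, (if glue k (fun _ => true) (sInf {i | glue k (fun _ => true) i = true} + 1 + n) = false
        then q (sInf {i | glue k (fun _ => true) i = true} + 1) (n + 1) else 0) = 0 := by
      intro n
      have : glue k (fun _ => true) (sInf {i | glue k (fun _ => true) i = true} + 1 + n) = true := by
        rw [hinf]; exact (hb _).mpr (by omega)
      simp [this]
    simp [Pker, hex, hterm]
  have h1 : sInf {x | ∃ z : ℕ → Bool, x = Pker ε q true (glue k z)} = ε :=
    le_antisymm (csInf_le ⟨ε, hlb true⟩ hmem_t) (le_csInf ⟨ε, hmem_t⟩ (hlb true))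
  have h2 : sInf {x | ∃ z : ℕ → Bool, x = Pker ε q false (glue k z)} = ε :=
    le_antisymm (csInf_le ⟨ε, hlb false⟩ hmem_f) (le_csInf ⟨ε, hmem_f⟩ (hlb false))
  constructor
  · rw [omegaK, h1, h2]; ring
  · linarith

end Stmt13
end

section
/- Consider the kernel on $A=\{-1,1\}$ defined by $P(1|\underline{a}) = \epsilon + 1/f(\mathcal{K}(\underline{a}))$, where $\mathcal{K}(\underline{a}) = \inf\{i\ge1 : a_{-k}=a_{-k-1} \text{ for all } k \ge i\}$ (with $\mathcal{K}=+\infty$ if the set is empty) and $f$ is unbounded, increasing, integer valued with $f(1) \ge 1/(1-2\epsilon)$. Then: (a) $P$ is discontinuous at every past with only finitely many sign changes (finitely many $-1$'s or finitely many $1$'s); (b) $P$ is continuous at every past with infinitely many sign changes. -/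
namespace Stmt18

open scoped Classical

/-- `ā` (encoded as `b : ℕ → Bool`, `b k` the symbol at position `-(k+1)`) is
eventually constant: `𝒦(ā) = inf{i ≥ 1 : a_{-k} = a_{-k-1} ∀ k ≥ i}` is finite. -/
def evConst (b : ℕ → Bool) : Prop := ∃ i : ℕ, 1 ≤ i ∧ ∀ k, i ≤ k → b (k - 1) = b k

/-- The kernel `P(1|ā) = ε + 1/f(𝒦(ā))` (with `1/f(∞) = 0`, i.e. `P(1|ā) = ε`
when `ā` has infinitely many sign changes). -/
noncomputable def P1 (ε : ℝ) (f : ℕ → ℕ) (b : ℕ → Bool) : ℝ :=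
  if evConst b then
    ε + 1 / (f (sInf {i : ℕ | 1 ≤ i ∧ ∀ k, i ≤ k → b (k - 1) = b k}) : ℝ)
  else ε

/-- The past `a_{-k}^{-1} z̲`. -/
def glue (k : ℕ) (b z : ℕ → Bool) : ℕ → Bool := fun j => if j < k then b j else z (j - k)

/-- `ω_k(ā) = inf_z P(1|a_{-k}^{-1}z̲) + inf_z P(-1|a_{-k}^{-1}z̲)`. -/
noncomputable def omegaK (ε : ℝ) (f : ℕ → ℕ) (k : ℕ) (b : ℕ → Bool) : ℝ :=
  sInf {x | ∃ z : ℕ → Bool, x = P1 ε f (glue k b z)} +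
    sInf {x | ∃ z : ℕ → Bool, x = 1 - P1 ε f (glue k b z)}

def alt : ℕ → Bool := fun j => decide (j % 2 = 0)

lemma alt_ne (m : ℕ) : alt m ≠ alt (m+1) := by
  simp only [alt, ne_eq, decide_eq_decide]
  omega

lemma glue_alt_not_evConst (k : ℕ) (b : ℕ → Bool) : ¬ evConst (glue k b alt) := by
  rintro ⟨i, hi, h⟩
  have hj := h (max i k + 1) (by omega)
  have h1 : max i k + 1 - 1 = max i k := by omega
  rw [h1] at hj
  unfold glue at hj
  rw [if_neg (by omega), if_neg (by omega)] at hj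
  have h2 : max i k + 1 - k = (max i k - k) + 1 := by omega
  rw [h2] at hj
  exact alt_ne _ hj

lemma P1_ge (ε : ℝ) (f : ℕ → ℕ) (b : ℕ → Bool) : ε ≤ P1 ε f b := by
  unfold P1; split
  · have : (0:ℝ) ≤ 1 / ((f (sInf {i : ℕ | 1 ≤ i ∧ ∀ k, i ≤ k → b (k - 1) = b k})) : ℝ) := by
      positivity
    linarith
  · exact le_rfl

lemma P1_le (ε : ℝ) (hε : ε ∈ Set.Ioo (0:ℝ) (1/2)) (f : ℕ → ℕ) (hf : StrictMono f)
    (hf1 : 1 / (1 - 2*ε) ≤ (f 1 : ℝ)) (b : ℕ → Bool) : P1 ε f b ≤ 1 - ε := by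
  obtain ⟨hε0, hε2⟩ := hε
  have h2 : (0:ℝ) < 1 - 2*ε := by linarith
  have hf1pos : (0:ℝ) < f 1 := lt_of_lt_of_le (by positivity) hf1
  unfold P1; split
  case isTrue h =>
    set S := {i : ℕ | 1 ≤ i ∧ ∀ k, i ≤ k → b (k - 1) = b k} with hS
    have hSne : S.Nonempty := h
    have hmem := Nat.sInf_mem hSne
    have h1 : 1 ≤ sInf S := hmem.1
    have hle : (f 1 : ℝ) ≤ f (sInf S) := by exact_mod_cast hf.monotone h1
    have h3 : 1 / (f (sInf S) : ℝ) ≤ 1 / (f 1 : ℝ) :=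
      one_div_le_one_div_of_le hf1pos hle
    have h4 : 1 / (f 1 : ℝ) ≤ 1 - 2*ε := by
      rw [div_le_iff₀ hf1pos]
      rw [div_le_iff₀ h2] at hf1
      nlinarith
    linarith
  case isFalse => linarith

lemma P1_alt (ε : ℝ) (f : ℕ → ℕ) (k : ℕ) (b : ℕ → Bool) :
    P1 ε f (glue k b alt) = ε := by
  unfold P1; rw [if_neg (glue_alt_not_evConst k b)]

lemma sInf_P1 (ε : ℝ) (f : ℕ → ℕ) (k : ℕ) (b : ℕ → Bool) :
    sInf {x | ∃ z : ℕ → Bool, x = P1 ε f (glue k b z)} = ε := by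
  have hbdd : BddBelow {x | ∃ z : ℕ → Bool, x = P1 ε f (glue k b z)} := by
    refine ⟨ε, ?_⟩
    rintro x ⟨z, rfl⟩; exact P1_ge ..
  have hmem : ε ∈ {x | ∃ z : ℕ → Bool, x = P1 ε f (glue k b z)} :=
    ⟨alt, (P1_alt ε f k b).symm⟩
  have hne : Set.Nonempty {x | ∃ z : ℕ → Bool, x = P1 ε f (glue k b z)} :=
    ⟨ε, hmem⟩
  apply le_antisymm (csInf_le hbdd hmem)
  apply le_csInf hne
  rintro x ⟨z, rfl⟩; exact P1_ge ..

lemma sInf_glue_gt (ε : ℝ) (f : ℕ → ℕ) (k j₀ : ℕ) (b z : ℕ → Bool) (hj₀1 : 1 ≤ j₀)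
    (hj₀ : b (j₀-1) ≠ b j₀) (hk : j₀ < k) (h : evConst (glue k b z)) :
    j₀ < sInf {i : ℕ | 1 ≤ i ∧ ∀ m, i ≤ m → glue k b z (m-1) = glue k b z m} := by
  have hSne : Set.Nonempty {i : ℕ | 1 ≤ i ∧ ∀ m, i ≤ m → glue k b z (m-1) = glue k b z m} := h
  have hmem := Nat.sInf_mem hSne
  by_contra hle
  push_neg at hle
  have hc := hmem.2 j₀ hle
  unfold glue at hc
  rw [if_pos (by omega), if_pos hk] at hc
  exact hj₀ hc

lemma glue_const_mem (k K : ℕ) (b : ℕ → Bool) (hK1 : 1 ≤ K)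
    (hK : ∀ j, K ≤ j → b (j-1) = b j) (hk : K ≤ k) :
    K ∈ {i : ℕ | 1 ≤ i ∧ ∀ m, i ≤ m →
      glue k b (fun _ => b (k-1)) (m-1) = glue k b (fun _ => b (k-1)) m} := by
  refine ⟨hK1, fun m hm => ?_⟩
  unfold glue
  split_ifs with h1 h2 h2
  · exact hK m hm
  · have : m = k := by omega
    subst this; rfl
  · exact absurd h2 (by omega)
  · rfl

/-- With `f` unbounded, strictly increasing, integer valued and
`f 1 ≥ 1/(1-2ε)`: (a) `P` is discontinuous at every past with only finitely many
sign changes (i.e. eventually constant); (b) `P` is continuous at every past with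
infinitely many sign changes. -/
theorem stmt18 (ε : ℝ) (hε : ε ∈ Set.Ioo (0 : ℝ) (1 / 2))
    (f : ℕ → ℕ) (hf : StrictMono f) (hfunb : ∀ N : ℕ, ∃ n, N ≤ f n)
    (hf1 : 1 / (1 - 2 * ε) ≤ (f 1 : ℝ)) :
    (∀ b : ℕ → Bool, evConst b →
      ¬ Filter.Tendsto (fun k => omegaK ε f k b) Filter.atTop (nhds 1)) ∧
    (∀ b : ℕ → Bool, ¬ evConst b →
      Filter.Tendsto (fun k => omegaK ε f k b) Filter.atTop (nhds 1)) := by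
  have hε0 := hε.1
  have hε2 := hε.2
  -- generic facts about the second inf
  have hbdd2 : ∀ (k : ℕ) (b : ℕ → Bool),
      BddBelow {x | ∃ z : ℕ → Bool, x = 1 - P1 ε f (glue k b z)} := by
    intro k b
    refine ⟨ε, ?_⟩
    rintro x ⟨z, rfl⟩
    have := P1_le ε hε f hf hf1 (glue k b z)
    linarith
  have hmem2 : ∀ (k : ℕ) (b : ℕ → Bool),
      (1 - ε) ∈ {x | ∃ z : ℕ → Bool, x = 1 - P1 ε f (glue k b z)} := by
    intro k b
    exact ⟨alt, by rw [P1_alt ε f k b]⟩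
  have hone : ∀ (k : ℕ) (b : ℕ → Bool),
      sInf {x | ∃ z : ℕ → Bool, x = 1 - P1 ε f (glue k b z)} ≤ 1 - ε := by
    intro k b
    exact csInf_le (hbdd2 k b) (hmem2 k b)
  constructor
  · -- (a) discontinuity at eventually constant pasts
    rintro b ⟨K, hK1, hK⟩ hT
    have hfK : (0:ℕ) < f K := (Nat.zero_le (f 0)).trans_lt (hf hK1)
    have hfKR : (0:ℝ) < f K := by exact_mod_cast hfK
    -- for k ≥ K, ω_k ≤ 1 - 1/f K
    have hbound : ∀ k, K ≤ k → omegaK ε f k b ≤ 1 - 1 / (f K : ℝ) := by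
      intro k hk
      set c : ℕ → Bool := fun _ => b (k-1) with hc
      have hmemK := glue_const_mem k K b hK1 hK hk
      have hev : evConst (glue k b c) := ⟨K, hmemK⟩
      set S := {i : ℕ | 1 ≤ i ∧ ∀ m, i ≤ m → glue k b c (m-1) = glue k b c m} with hS
      have hsle : sInf S ≤ K := Nat.sInf_le hmemK
      have hs1 : 1 ≤ sInf S := (Nat.sInf_mem (⟨K, hmemK⟩ : S.Nonempty)).1
      have hfs : (0:ℕ) < f (sInf S) := (Nat.zero_le (f 0)).trans_lt (hf hs1)
      have hfsR : (0:ℝ) < f (sInf S) := by exact_mod_cast hfs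
      have hle : (f (sInf S) : ℝ) ≤ f K := by exact_mod_cast hf.monotone hsle
      have hdiv : 1 / (f K : ℝ) ≤ 1 / (f (sInf S) : ℝ) :=
        one_div_le_one_div_of_le hfsR hle
      have hP1 : P1 ε f (glue k b c) = ε + 1 / (f (sInf S) : ℝ) := by
        unfold P1; rw [if_pos hev]
      have hmemc : (1 - P1 ε f (glue k b c)) ∈
          {x | ∃ z : ℕ → Bool, x = 1 - P1 ε f (glue k b z)} := ⟨c, rfl⟩
      have h2 : sInf {x | ∃ z : ℕ → Bool, x = 1 - P1 ε f (glue k b z)} ≤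
          1 - ε - 1 / (f K : ℝ) := by
        refine le_trans (csInf_le (hbdd2 k b) hmemc) ?_
        rw [hP1]; linarith
      unfold omegaK
      rw [sInf_P1]
      linarith
    have h1 : (1:ℝ) - 1 / (f K : ℝ) < 1 := by
      have : (0:ℝ) < 1 / (f K : ℝ) := by positivity
      linarith
    have hev := hT.eventually (eventually_gt_nhds h1)
    obtain ⟨k, hk1, hk2⟩ := (hev.and (Filter.eventually_ge_atTop K)).exists
    have := hbound k hk2
    linarith
  · -- (b) continuity at pasts with infinitely many sign changes
    intro b hb
    have hb' : ∀ i, 1 ≤ i → ∃ j, i ≤ j ∧ b (j-1) ≠ b j := by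
      intro i hi
      by_contra hcon
      push_neg at hcon
      exact hb ⟨i, hi, hcon⟩
    rw [Metric.tendsto_atTop]
    intro δ hδ
    obtain ⟨N, hN⟩ := exists_nat_gt (1/δ)
    have hN1 : (0:ℝ) < (N:ℝ) + 1 := by positivity
    have hNδ : 1 / ((N:ℝ)+1) < δ := by
      rw [div_lt_iff₀ hN1]
      rw [div_lt_iff₀ hδ] at hN
      nlinarith
    obtain ⟨j₀, hj₀N, hj₀⟩ := hb' (N+1) (by omega)
    refine ⟨j₀+1, fun k hk => ?_⟩
    -- uniform bound on P1 over tails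
    have hPb : ∀ z : ℕ → Bool, P1 ε f (glue k b z) ≤ ε + 1 / ((N:ℝ)+1) := by
      intro z
      by_cases hz : evConst (glue k b z)
      · set S := {i : ℕ | 1 ≤ i ∧ ∀ m, i ≤ m → glue k b z (m-1) = glue k b z m} with hS
        have hgt : j₀ < sInf S :=
          sInf_glue_gt ε f k j₀ b z (by omega) hj₀ (by omega) hz
        have hns : N + 1 ≤ sInf S := by omega
        have hfs : N + 1 ≤ f (sInf S) := le_trans hns (le_trans hf.le_apply (le_refl _))
        have hfsR : ((N:ℝ)+1) ≤ f (sInf S) := by exact_mod_cast hfs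
        have hdiv : 1 / (f (sInf S) : ℝ) ≤ 1 / ((N:ℝ)+1) :=
          one_div_le_one_div_of_le hN1 hfsR
        have hP1 : P1 ε f (glue k b z) = ε + 1 / (f (sInf S) : ℝ) := by
          unfold P1; rw [if_pos hz]
        rw [hP1]; linarith
      · have hP1 : P1 ε f (glue k b z) = ε := by
          unfold P1; rw [if_neg hz]
        rw [hP1]
        have : (0:ℝ) ≤ 1 / ((N:ℝ)+1) := by positivity
        linarith
    have hlow : 1 - ε - 1 / ((N:ℝ)+1) ≤
        sInf {x | ∃ z : ℕ → Bool, x = 1 - P1 ε f (glue k b z)} := by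
      refine le_csInf ⟨1 - ε, hmem2 k b⟩ ?_
      rintro x ⟨z, rfl⟩
      have := hPb z
      linarith
    have hup := hone k b
    have hω : omegaK ε f k b =
        ε + sInf {x | ∃ z : ℕ → Bool, x = 1 - P1 ε f (glue k b z)} := by
      unfold omegaK; rw [sInf_P1]
    rw [Real.dist_eq, abs_lt]
    constructor <;> rw [hω] <;> linarith


end Stmt18
end
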